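/- arXiv:2412.12958 — 7 statements merged into one kernel-verified Lean document; each statement's English description precedes it below -/
import Mathlib

section
/- Let G be an r-regular graph on n vertices and let τ < 0 be the smallest eigenvalue of its adjacency matrix. Then the stability number satisfies α(G) ≤ n/(1 - r/τ) (Hoffman's ratio bound). -/
/-!
Test the Rayleigh bound `τ ‖x‖² ≤ xᵀ A x` (valid since `A - τ I` is positive semidefinite)
on `x = n 1_S - |S| 1` for an independent set `S`. Since `1_Sᵀ A 1_S = 0` and `A 1 = r 1`,
this gives `xᵀ A x = -r n |S|²` and `‖x‖² = n |S| (n - |S|)`, hence `|S| (r - τ) ≤ -τ n`.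
-/

open scoped Classical

/-- The real adjacency matrix of a simple graph. -/
noncomputable def adjMat {V : Type} (G : SimpleGraph V) : Matrix V V ℝ :=
  Matrix.of fun i j => if G.Adj i j then 1 else 0

/-- The set of eigenvalues of a real matrix. -/
def matrixSpectrum {V : Type} [Fintype V] (A : Matrix V V ℝ) : Set ℝ :=
  {μ | ∃ v : V → ℝ, v ≠ 0 ∧ A.mulVec v = μ • v}

/-- The stability number: the largest cardinality of a set of pairwise
non-adjacent vertices. -/
noncomputable def stabilityNumber {V : Type} (G : SimpleGraph V) : ℕ :=
  sSup {n | ∃ s : Finset V, (∀ a ∈ s, ∀ b ∈ s, ¬ G.Adj a b) ∧ s.card = n}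

open Matrix Finset

section Spectrum

variable {V : Type} [Fintype V]

theorem add_mem_matrixSpectrum_of_mem_sub_smul_one {A : Matrix V V ℝ} {τ μ : ℝ}
    (h : μ ∈ matrixSpectrum (A - τ • 1)) : μ + τ ∈ matrixSpectrum A := by
  obtain ⟨v, hv, hAv⟩ := h
  refine ⟨v, hv, ?_⟩
  rw [sub_mulVec, smul_mulVec, one_mulVec] at hAv
  rw [add_smul, ← hAv, sub_add_cancel]

theorem Matrix.IsHermitian.eigenvalues_mem_matrixSpectrum {A : Matrix V V ℝ}
    (hA : A.IsHermitian) (i : V) : hA.eigenvalues i ∈ matrixSpectrum A :=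
  ⟨_, (WithLp.ofLp_eq_zero 2).ne.2 <| hA.eigenvectorBasis.orthonormal.ne_zero i,
    hA.mulVec_eigenvectorBasis i⟩

theorem Matrix.IsHermitian.mul_dotProduct_self_le {A : Matrix V V ℝ} (hA : A.IsHermitian)
    {τ : ℝ} (hτ : ∀ μ ∈ matrixSpectrum A, τ ≤ μ) (x : V → ℝ) :
    τ * (x ⬝ᵥ x) ≤ x ⬝ᵥ A *ᵥ x := by
  have hB : (A - τ • 1).IsHermitian := hA.sub (isHermitian_one.smul (IsSelfAdjoint.all τ))
  have hpsd : (A - τ • 1).PosSemidef := hB.posSemidef_iff_eigenvalues_nonneg.mpr fun i =>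
    sub_nonneg.mp <| by
      simpa using hτ _ (add_mem_matrixSpectrum_of_mem_sub_smul_one
        (hB.eigenvalues_mem_matrixSpectrum i))
  have := hpsd.dotProduct_mulVec_nonneg x
  simp only [star_trivial, sub_mulVec, smul_mulVec, one_mulVec, dotProduct_sub,
    dotProduct_smul, smul_eq_mul] at this
  linarith

end Spectrum

theorem Finset.indicator_one_dotProduct {ι R : Type*} [Fintype ι] [NonAssocSemiring R]
    (s : Finset ι) (y : ι → R) : (s : Set ι).indicator 1 ⬝ᵥ y = ∑ i ∈ s, y i := by
  simp only [dotProduct, ← Set.indicator_mul_left, Pi.one_apply, one_mul]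
  exact Finset.sum_indicator_subset _ (subset_univ s)

namespace SimpleGraph

variable {V : Type} [Fintype V] {G : SimpleGraph V} [DecidableRel G.Adj]

theorem adjMatrix_mulVec_one_of_regular {R : Type*} [NonAssocSemiring R] {r : ℕ}
    (hreg : G.IsRegularOfDegree r) : G.adjMatrix R *ᵥ 1 = (r : R) • 1 := by
  ext v
  simpa using adjMatrix_mulVec_const_apply_of_regular (α := R) (a := 1) hreg (v := v)

theorem IsIndepSet.dotProduct_adjMatrix_mulVec_indicator {s : Finset V}
    (hs : G.IsIndepSet (s : Set V)) :
    (s : Set V).indicator 1 ⬝ᵥ G.adjMatrix ℝ *ᵥ (s : Set V).indicator 1 = 0 := by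
  rw [dotProduct_mulVec_adjMatrix]
  refine Finset.sum_eq_zero fun i _ => Finset.sum_eq_zero fun j _ => ?_
  by_cases hi : i ∈ s
  · by_cases hj : j ∈ s
    · have hij : ¬G.Adj i j := fun h => hs (mem_coe.2 hi) (mem_coe.2 hj) (G.ne_of_adj h) h
      simp [hij]
    · simp [hj]
  · simp [hi]

theorem IsIndepSet.card_mul_sub_le {s : Finset V} (hs : G.IsIndepSet (s : Set V)) {r : ℕ}
    (hreg : G.IsRegularOfDegree r) {τ : ℝ} (hτ : τ ≤ 0)
    (hA : ∀ x : V → ℝ, τ * (x ⬝ᵥ x) ≤ x ⬝ᵥ G.adjMatrix ℝ *ᵥ x) :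
    #s * (r - τ) ≤ -τ * Fintype.card V := by
  set A := G.adjMatrix ℝ
  set e : V → ℝ := (s : Set V).indicator 1
  set α : ℝ := (#s : ℝ)
  set n : ℝ := (Fintype.card V : ℝ)
  have hee : e ⬝ᵥ e = α := by
    rw [indicator_one_dotProduct, sum_congr rfl fun i hi => Set.indicator_of_mem (mem_coe.2 hi) 1]
    simp [α]
  have he1 : e ⬝ᵥ 1 = α := by simp [e, α, indicator_one_dotProduct]
  have h11 : (1 : V → ℝ) ⬝ᵥ 1 = n := by simp [n, dotProduct]
  have hA1 : A *ᵥ 1 = (r : ℝ) • 1 := adjMatrix_mulVec_one_of_regular hreg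
  have h1Ae : 1 ⬝ᵥ A *ᵥ e = r * α := by
    rw [dotProduct_mulVec, ← mulVec_transpose, transpose_adjMatrix, hA1, smul_dotProduct,
      dotProduct_comm, he1, smul_eq_mul]
  have heAe : e ⬝ᵥ A *ᵥ e = 0 := hs.dotProduct_adjMatrix_mulVec_indicator
  have hx := hA (n • e - α • 1)
  simp only [mulVec_sub, mulVec_smul, dotProduct_sub, sub_dotProduct, dotProduct_smul,
    smul_dotProduct, smul_eq_mul, hA1, h1Ae, heAe, hee, he1, h11, dotProduct_comm 1 e] at hx
  have hkey : n * α * (τ * (n - α) + r * α) ≤ 0 := by linear_combination hx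
  have hαn : α ≤ n := Nat.cast_le.2 s.card_le_univ
  rcases (show 0 ≤ α from Nat.cast_nonneg _).eq_or_lt with hempty | hpos
  · rw [← hempty]
    nlinarith
  · have := nonpos_of_mul_nonpos_right hkey (by nlinarith)
    linarith

end SimpleGraph

theorem exists_isIndepSet_card_eq_stabilityNumber {V : Type} [Fintype V] (G : SimpleGraph V) :
    ∃ s : Finset V, G.IsIndepSet (s : Set V) ∧ #s = stabilityNumber G := by
  have hbdd : BddAbove {n | ∃ s : Finset V, (∀ a ∈ s, ∀ b ∈ s, ¬G.Adj a b) ∧ #s = n} :=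
    ⟨Fintype.card V, by rintro _ ⟨s, -, rfl⟩; exact s.card_le_univ⟩
  obtain ⟨s, hs, hcard⟩ : stabilityNumber G ∈ _ := Nat.sSup_mem ⟨0, ∅, by simp⟩ hbdd
  exact ⟨s, fun a ha b hb _ => hs a ha b hb, hcard⟩

theorem stmt2_general {V : Type} [Fintype V] (G : SimpleGraph V) (r : ℕ) (τ : ℝ)
    (hreg : G.IsRegularOfDegree r)
    (hτmin : ∀ μ ∈ matrixSpectrum (adjMat G), τ ≤ μ)
    (hτneg : τ < 0) :
    (stabilityNumber G : ℝ) ≤ (Fintype.card V : ℝ) / (1 - (r : ℝ) / τ) := by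
  obtain ⟨s, hs, hcard⟩ := exists_isIndepSet_card_eq_stabilityNumber G
  have hrayleigh :=
    (isHermitian_iff_isSymm.2 (G.isSymm_adjMatrix (α := ℝ))).mul_dotProduct_self_le hτmin
  have hbound := hs.card_mul_sub_le hreg hτneg.le hrayleigh
  have hden : 0 < 1 - (r : ℝ) / τ := by
    have : (r : ℝ) / τ ≤ 0 := div_nonpos_of_nonneg_of_nonpos r.cast_nonneg hτneg.le
    linarith
  have hscale : (#s : ℝ) * (1 - r / τ) = #s * (r - τ) / -τ := by
    field_simp [hτneg.ne]
    ring
  rw [← hcard, le_div_iff₀ hden, hscale, div_le_iff₀ (neg_pos.2 hτneg)]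
  linarith

theorem stmt2 {V : Type} [Fintype V] (G : SimpleGraph V) (r : ℕ) (τ : ℝ)
    (hreg : G.IsRegularOfDegree r)
    (hτmem : τ ∈ matrixSpectrum (adjMat G))
    (hτmin : ∀ μ ∈ matrixSpectrum (adjMat G), τ ≤ μ)
    (hτneg : τ < 0) :
    (stabilityNumber G : ℝ) ≤ (Fintype.card V : ℝ) / (1 - (r : ℝ) / τ) :=
  stmt2_general G r τ hreg hτmin hτneg
end

section
/- For any graph G on n vertices, ϑ(G)·ϑ(Ḡ) ≥ n, where ϑ is the Lovász theta function. -/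
/-!
Suppose `ϑ(G) < t`. If `J - tI` were outside the interior of the convex cone of matrices
`Λ - S + K` (`Λ` vanishing off the edges of `G`, `S ⪰ 0`, `K` skew-symmetric), a nonzero functional
`X ↦ ⟨Z, X⟩` supporting the cone at `J - tI` would have `Z ⪰ 0` vanishing on the edges of `G`, and
`Z / tr Z` would be a feasible point of value at least `t`. So `J - tI` lies in the cone, which
after symmetrising says `tI + Λ ⪰ J` for some `Λ` supported on the edges of `G`.

Given such certificates `A = tI + Λ₁ ⪰ J` for `G` and `B = sI + Λ₂ ⪰ J` for `Gᶜ`, the off-diagonal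
supports of `Λ₁` and `Λ₂` are disjoint, so `A ⊙ B = ts I`, while the Schur product theorem gives
`A ⊙ B ⪰ J ⊙ J = J`. Testing against the all-ones vector gives `ts n ≥ n²`.
-/

open scoped Classical

/-- The Lovász theta function of a graph, as the optimal value of the SDP
max { <J, X> : X ⪰ 0, tr X = 1, X_{ij} = 0 for all edges {i,j} }. -/
noncomputable def lovaszTheta {V : Type} [Fintype V] (G : SimpleGraph V) : ℝ :=
  sSup {t | ∃ X : Matrix V V ℝ, X.PosSemidef ∧ X.trace = 1 ∧
    (∀ i j, G.Adj i j → X i j = 0) ∧ t = ∑ i, ∑ j, X i j}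

open Matrix Filter Topology

namespace Matrix

lemma PosSemidef.hadamard_sub_hadamard_self {m : Type*} {A B C : Matrix m m ℝ}
    (hC : C.PosSemidef) (hAC : (A - C).PosSemidef) (hBC : (B - C).PosSemidef) :
    (A ⊙ B - C ⊙ C).PosSemidef := by
  have hB : B.PosSemidef := by simpa using hBC.add hC
  have h : A ⊙ B - C ⊙ C = (A - C) ⊙ B + C ⊙ (B - C) := by
    ext i j
    simp only [sub_apply, add_apply, hadamard_apply]
    ring
  rw [h]
  exact (hAC.hadamard hB).add (hC.hadamard hBC)

variable {n : Type} [Fintype n]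

lemma PosSemidef.apply_add_apply_le {X : Matrix n n ℝ} (hX : X.PosSemidef) (i j : n) :
    X i j + X j i ≤ X i i + X j j := by
  have h := hX.dotProduct_mulVec_nonneg (Pi.single i 1 - Pi.single j 1)
  simp only [star_trivial, mulVec_sub, mulVec_single, MulOpposite.op_one, one_smul,
    dotProduct_sub, sub_dotProduct, single_dotProduct, col_apply, one_mul] at h
  linarith

lemma PosSemidef.sum_apply_le_card_mul_trace {X : Matrix n n ℝ} (hX : X.PosSemidef) :
    ∑ i, ∑ j, X i j ≤ Fintype.card n * X.trace := by
  have h := Finset.sum_le_sum fun i (_ : i ∈ Finset.univ) =>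
    Finset.sum_le_sum fun j (_ : j ∈ Finset.univ) => hX.apply_add_apply_le i j
  have hswap : ∑ i, ∑ j, X j i = ∑ i, ∑ j, X i j := Finset.sum_comm
  simp only [Finset.sum_add_distrib, hswap, Finset.sum_const, Finset.card_univ, nsmul_eq_mul,
    ← Finset.mul_sum] at h
  simp only [trace, diag_apply]
  linarith

lemma PosSemidef.sum_apply_nonneg {X : Matrix n n ℝ} (hX : X.PosSemidef) :
    0 ≤ ∑ i, ∑ j, X i j := by
  simpa [dotProduct, mulVec] using hX.dotProduct_mulVec_nonneg 1

lemma _root_.LinearMap.apply_eq_sum_mul_single (f : Matrix n n ℝ →ₗ[ℝ] ℝ) (M : Matrix n n ℝ) :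
    f M = ∑ i, ∑ j, M i j * f (single i j 1) := by
  conv_lhs => rw [M.matrix_eq_sum_single]
  rw [map_sum]
  refine Finset.sum_congr rfl fun i _ => ?_
  rw [map_sum]
  refine Finset.sum_congr rfl fun j _ => ?_
  rw [show single i j (M i j) = M i j • single i j (1 : ℝ) by rw [smul_single, smul_eq_mul,
    mul_one], map_smul, smul_eq_mul]

end Matrix

lemma le_mul_of_forall_gt_le_mul {a b c : ℝ} (h : ∀ t > a, ∀ s > b, c ≤ t * s) :
    c ≤ a * b := by
  have hlim : Tendsto (fun ε => (a + ε) * (b + ε)) (𝓝[>] 0) (𝓝 (a * b)) := by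
    have := ((continuous_const.add continuous_id).mul
      (continuous_const.add continuous_id)).tendsto (0 : ℝ) (f := fun ε => (a + ε) * (b + ε))
    simpa using this.mono_left nhdsWithin_le_nhds
  refine ge_of_tendsto hlim (eventually_nhdsWithin_of_forall fun ε (hε : 0 < ε) => ?_)
  exact h _ (lt_add_of_pos_right a hε) _ (lt_add_of_pos_right b hε)

lemma le_lovaszTheta {V : Type} [Fintype V] {G : SimpleGraph V} {X : Matrix V V ℝ}
    (hX : X.PosSemidef) (htr : X.trace = 1) (hG : ∀ i j, G.Adj i j → X i j = 0) :
    ∑ i, ∑ j, X i j ≤ lovaszTheta G := by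
  refine le_csSup ⟨Fintype.card V, ?_⟩ ⟨X, hX, htr, hG, rfl⟩
  rintro _ ⟨Y, hY, hYtr, -, rfl⟩
  simpa [hYtr] using hY.sum_apply_le_card_mul_trace

lemma lovaszTheta_nonneg {V : Type} [Fintype V] (G : SimpleGraph V) : 0 ≤ lovaszTheta G :=
  Real.sSup_nonneg fun _ ⟨_, hX, _, _, hv⟩ => hv ▸ hX.sum_apply_nonneg

namespace ConvexCone

variable {E : Type*}

lemma apply_nonpos_of_forall_le [AddCommGroup E] [Module ℝ E] (C : ConvexCone ℝ E)
    (f : E →ₗ[ℝ] ℝ) {c : ℝ} (h : ∀ a ∈ C, f a ≤ c) {a : E} (ha : a ∈ C) : f a ≤ 0 := by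
  by_contra! hpos
  have hk : 0 < (|c| + 1) / f a := by positivity
  have := h _ (C.smul_mem hk ha)
  rw [map_smul, smul_eq_mul, div_mul_cancel₀ _ hpos.ne'] at this
  linarith [le_abs_self c]

lemma interior_nonempty_of_span_eq_top [NormedAddCommGroup E] [NormedSpace ℝ E]
    [FiniteDimensional ℝ E] (C : ConvexCone ℝ E) (h0 : (0 : E) ∈ C)
    (hspan : Submodule.span ℝ (C : Set E) = ⊤) : (interior (C : Set E)).Nonempty := by
  rw [C.convex.interior_nonempty_iff_affineSpan_eq_top,
    AffineSubspace.affineSpan_eq_top_iff_vectorSpan_eq_top_of_nonempty ℝ E E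
      (Set.nonempty_of_mem h0), eq_top_iff, ← hspan]
  exact Submodule.span_mono fun x hx => by simpa using Set.vsub_mem_vsub hx h0

end ConvexCone

namespace SimpleGraph

variable {V : Type}

def IsThetaDualFeasible (G : SimpleGraph V) (t : ℝ) (Λ : Matrix V V ℝ) : Prop :=
  (∀ i j, ¬ G.Adj i j → Λ i j = 0) ∧ (t • 1 + Λ - of fun _ _ => 1).PosSemidef

/-- The skew-symmetric summand `K` gives the cone a nonempty interior, so that it can be
separated from a point without proving it closed. -/
def thetaDualCone (G : SimpleGraph V) : ConvexCone ℝ (Matrix V V ℝ) where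
  carrier := {M | ∃ Λ S K : Matrix V V ℝ, (∀ i j, ¬ G.Adj i j → Λ i j = 0) ∧ S.PosSemidef ∧
    Kᵀ = -K ∧ M = Λ - S + K}
  smul_mem' := by
    rintro c hc _ ⟨Λ, S, K, hΛ, hS, hK, rfl⟩
    refine ⟨c • Λ, c • S, c • K, fun i j h => by simp [hΛ i j h], hS.smul hc.le, ?_, ?_⟩
    · rw [transpose_smul, hK, smul_neg]
    · simp only [smul_add, smul_sub]
  add_mem' := by
    rintro _ ⟨Λ₁, S₁, K₁, hΛ₁, hS₁, hK₁, rfl⟩ _ ⟨Λ₂, S₂, K₂, hΛ₂, hS₂, hK₂, rfl⟩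
    refine ⟨Λ₁ + Λ₂, S₁ + S₂, K₁ + K₂, fun i j h => by simp [hΛ₁ i j h, hΛ₂ i j h],
      hS₁.add hS₂, ?_, by abel⟩
    rw [transpose_add, hK₁, hK₂, neg_add]

variable {G : SimpleGraph V}

lemma mem_thetaDualCone_of_forall_not_adj {Λ : Matrix V V ℝ}
    (hΛ : ∀ i j, ¬ G.Adj i j → Λ i j = 0) : Λ ∈ G.thetaDualCone :=
  ⟨Λ, 0, 0, hΛ, .zero, by simp, by simp⟩

lemma zero_mem_thetaDualCone : (0 : Matrix V V ℝ) ∈ G.thetaDualCone :=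
  mem_thetaDualCone_of_forall_not_adj fun _ _ _ => rfl

lemma neg_mem_thetaDualCone_of_posSemidef {S : Matrix V V ℝ} (hS : S.PosSemidef) :
    -S ∈ G.thetaDualCone :=
  ⟨0, S, 0, fun _ _ _ => rfl, hS, by simp, by simp⟩

lemma mem_thetaDualCone_of_transpose_eq_neg {K : Matrix V V ℝ} (hK : Kᵀ = -K) :
    K ∈ G.thetaDualCone :=
  ⟨0, 0, K, fun _ _ _ => rfl, .zero, hK, by simp⟩

lemma single_mem_thetaDualCone {c : ℝ} {i j : V} (h : G.Adj i j) :
    single i j c ∈ G.thetaDualCone := by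
  refine mem_thetaDualCone_of_forall_not_adj fun k l hkl => ?_
  rw [single_apply, if_neg]
  rintro ⟨rfl, rfl⟩
  exact hkl h

lemma exists_isThetaDualFeasible_of_mem_thetaDualCone {t : ℝ}
    (h : (of fun _ _ => 1) - t • 1 ∈ G.thetaDualCone) : ∃ Λ, G.IsThetaDualFeasible t Λ := by
  obtain ⟨Λ, S, K, hΛ, hS, hK, hp⟩ := h
  refine ⟨(1 / 2 : ℝ) • (Λ + Λᵀ), fun i j hij => ?_, ?_⟩
  · simp [hΛ i j hij, hΛ j i (fun h => hij h.symm)]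
  · convert hS using 1
    ext i j
    have hij := congrFun (congrFun hp i) j
    have hji := congrFun (congrFun hp j) i
    have hKij := congrFun (congrFun hK i) j
    have hSij := congrFun (congrFun hS.isHermitian i) j
    simp only [transpose_apply, Matrix.neg_apply] at hKij
    simp only [conjTranspose_apply, star_trivial] at hSij
    simp only [Matrix.sub_apply, Matrix.add_apply, Matrix.smul_apply, of_apply, one_apply,
      transpose_apply, smul_eq_mul] at hij hji ⊢
    by_cases h : i = j
    · subst h; simp only [if_true] at hij ⊢; linarith
    · simp only [h, Ne.symm h, if_false] at hij hji ⊢; linarith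

variable [Fintype V]

lemma span_thetaDualCone_eq_top :
    Submodule.span ℝ (G.thetaDualCone : Set (Matrix V V ℝ)) = ⊤ := by
  set P := Submodule.span ℝ (G.thetaDualCone : Set (Matrix V V ℝ))
  have hpsd (x : V → ℝ) : vecMulVec x x ∈ P :=
    neg_neg (vecMulVec x x) ▸ P.neg_mem (Submodule.subset_span
      (neg_mem_thetaDualCone_of_posSemidef (posSemidef_vecMulVec_self_star x)))
  have hsingle (i j : V) : single i j (1 : ℝ) ∈ P := by
    set e : V → V → ℝ := fun k => Pi.single k 1
    have h2 : (2 : ℝ) • single i j (1 : ℝ) = (single i j 1 - single j i 1) +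
        (vecMulVec (e i + e j) (e i + e j) - vecMulVec (e i) (e i) - vecMulVec (e j) (e j)) := by
      simp only [two_smul, e, single_eq_single_vecMulVec_single, vecMulVec_add, add_vecMulVec]
      abel
    have hskew : single i j (1 : ℝ) - single j i 1 ∈ P :=
      Submodule.subset_span (mem_thetaDualCone_of_transpose_eq_neg (by simp [transpose_sub]))
    have := P.smul_mem (1 / 2 : ℝ)
      (h2 ▸ P.add_mem hskew (P.sub_mem (P.sub_mem (hpsd _) (hpsd _)) (hpsd _)))
    rwa [smul_smul, one_div_mul_cancel two_ne_zero, one_smul] at this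
  rw [eq_top_iff]
  intro M _
  rw [M.matrix_eq_sum_single]
  refine P.sum_mem fun i _ => P.sum_mem fun j _ => ?_
  rw [← mul_one (M i j), ← smul_eq_mul, ← smul_single]
  exact P.smul_mem _ (hsingle i j)

lemma le_lovaszTheta_of_nonpos_on_thetaDualCone {t : ℝ} (f : Matrix V V ℝ →ₗ[ℝ] ℝ)
    (hf0 : f ≠ 0) (hC : ∀ a ∈ G.thetaDualCone, f a ≤ 0)
    (hp : 0 ≤ f ((of fun _ _ => 1) - t • 1)) : t ≤ lovaszTheta G := by
  set Z : Matrix V V ℝ := of fun i j => f (single i j 1)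
  have hrep (M : Matrix V V ℝ) : f M = ∑ i, ∑ j, M i j * Z i j := f.apply_eq_sum_mul_single M
  have hzero (a : Matrix V V ℝ) (h : a ∈ G.thetaDualCone) (h' : -a ∈ G.thetaDualCone) :
      f a = 0 :=
    le_antisymm (hC a h) (by simpa using hC _ h')
  have hsymm (i j : V) : Z j i = Z i j := by
    have hK : (single i j (1 : ℝ) - single j i 1)ᵀ = -(single i j 1 - single j i 1) := by
      simp [transpose_sub]
    have := hzero _ (mem_thetaDualCone_of_transpose_eq_neg hK)
      (mem_thetaDualCone_of_transpose_eq_neg (by rw [transpose_neg, hK]))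
    simp only [map_sub] at this
    simp only [Z, of_apply]
    linarith
  have hadj (i j : V) (h : G.Adj i j) : Z i j = 0 :=
    hzero _ (single_mem_thetaDualCone h) (by rw [single_neg]; exact single_mem_thetaDualCone h)
  have hpsd : Z.PosSemidef := by
    refine PosSemidef.of_dotProduct_mulVec_nonneg
      (IsHermitian.ext fun i j => by simp [hsymm]) fun x => ?_
    have := hC _ (neg_mem_thetaDualCone_of_posSemidef (posSemidef_vecMulVec_self_star x))
    rw [map_neg, hrep, neg_nonpos] at this
    refine this.trans_eq ?_
    simp only [dotProduct, mulVec, vecMulVec_apply, star_trivial, Finset.mul_sum]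
    exact Finset.sum_congr rfl fun i _ => Finset.sum_congr rfl fun j _ => by ring
  have hZ0 : Z ≠ 0 := fun h => hf0 (LinearMap.ext fun M => by simp [hrep, h])
  have htr : 0 < Z.trace :=
    hpsd.trace_nonneg.lt_of_ne fun h => hZ0 (hpsd.trace_eq_zero_iff.1 h.symm)
  have hval : t * Z.trace ≤ ∑ i, ∑ j, Z i j := by
    rw [map_sub, map_smul, hrep, hrep] at hp
    simpa [one_apply, trace] using hp
  calc t = Z.trace⁻¹ * (t * Z.trace) := by field_simp
    _ ≤ Z.trace⁻¹ * ∑ i, ∑ j, Z i j := by gcongr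
    _ = ∑ i, ∑ j, (Z.trace⁻¹ • Z) i j := by simp [Finset.mul_sum]
    _ ≤ lovaszTheta G := le_lovaszTheta (hpsd.smul (inv_nonneg.2 htr.le))
        (by rw [trace_smul, smul_eq_mul, inv_mul_cancel₀ htr.ne'])
        fun i j h => by simp [hadj i j h]

attribute [local instance] Matrix.normedAddCommGroup Matrix.normedSpace in
lemma exists_isThetaDualFeasible_of_lovaszTheta_lt {t : ℝ} (ht : lovaszTheta G < t) :
    ∃ Λ, G.IsThetaDualFeasible t Λ := by
  by_contra h
  have hp : (of fun _ _ => 1) - t • 1 ∉ interior (G.thetaDualCone : Set (Matrix V V ℝ)) :=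
    fun hp => h (exists_isThetaDualFeasible_of_mem_thetaDualCone (interior_subset hp))
  obtain ⟨f, hf0, hf⟩ := geometric_hahn_banach_of_nonempty_interior_point G.thetaDualCone.convex
    hp (G.thetaDualCone.interior_nonempty_of_span_eq_top zero_mem_thetaDualCone
      span_thetaDualCone_eq_top)
  have hC (a) (ha : a ∈ G.thetaDualCone) : f a ≤ 0 :=
    G.thetaDualCone.apply_nonpos_of_forall_le f.toLinearMap hf ha
  have := le_lovaszTheta_of_nonpos_on_thetaDualCone f.toLinearMap
    (fun h => hf0 (ContinuousLinearMap.coe_injective (by simpa using h))) hC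
    (by simpa using hf 0 zero_mem_thetaDualCone)
  linarith

lemma card_le_mul_of_isThetaDualFeasible [Nonempty V] {t s : ℝ} {Λ₁ Λ₂ : Matrix V V ℝ}
    (h₁ : G.IsThetaDualFeasible t Λ₁) (h₂ : Gᶜ.IsThetaDualFeasible s Λ₂) :
    (Fintype.card V : ℝ) ≤ t * s := by
  set J : Matrix V V ℝ := of fun _ _ => 1
  have hJ : J.PosSemidef := by
    simpa [J, vecMulVec] using posSemidef_vecMulVec_self_star (1 : V → ℝ)
  have hprod : (t • 1 + Λ₁) ⊙ (s • 1 + Λ₂) = (t * s) • 1 := by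
    ext i j
    by_cases hij : i = j
    · subst hij
      simp [h₁.1 i i G.irrefl, h₂.1 i i Gᶜ.irrefl]
    · by_cases hadj : G.Adj i j
      · simp [hij, h₂.1 i j (by simp [hadj])]
      · simp [hij, h₁.1 i j hadj]
  have hJJ : J ⊙ J = J := by ext; simp [J]
  have key := hJ.hadamard_sub_hadamard_self h₁.2 h₂.2
  rw [hprod, hJJ] at key
  have := key.dotProduct_mulVec_nonneg 1
  simp only [dotProduct, Pi.star_apply, Pi.one_apply, star_trivial, mulVec, Matrix.sub_apply,
    Matrix.smul_apply, one_apply, smul_eq_mul, mul_ite, mul_one, mul_zero, of_apply,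
    Finset.sum_sub_distrib, Finset.sum_ite_eq, Finset.mem_univ, if_true, Finset.sum_const,
    Finset.card_univ, nsmul_eq_mul, one_mul, sub_nonneg, J] at this
  exact le_of_mul_le_mul_left this (by exact_mod_cast Fintype.card_pos)

end SimpleGraph

open SimpleGraph

theorem stmt5 {V : Type} [Fintype V] (G : SimpleGraph V) :
    (Fintype.card V : ℝ) ≤ lovaszTheta G * lovaszTheta Gᶜ := by
  rcases isEmpty_or_nonempty V with hV | hV
  · simpa using mul_nonneg (lovaszTheta_nonneg G) (lovaszTheta_nonneg Gᶜ)
  · refine le_mul_of_forall_gt_le_mul fun t ht s hs => ?_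
    obtain ⟨Λ₁, h₁⟩ := exists_isThetaDualFeasible_of_lovaszTheta_lt ht
    obtain ⟨Λ₂, h₂⟩ := exists_isThetaDualFeasible_of_lovaszTheta_lt hs
    exact card_le_mul_of_isThetaDualFeasible h₁ h₂
end

section
/- For every Paley graph P_q, the Lovász theta function satisfies ϑ(P_q) = √q. -/
open scoped Classical

/-- The Paley graph on a finite field: vertices are field elements, two vertices
adjacent iff their difference is a nonzero square. -/
def Paley (F : Type) [Field F] : SimpleGraph F :=
  SimpleGraph.fromRel (fun x y => ∃ z : F, z ≠ 0 ∧ x - y = z ^ 2)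

/-!
Let `C = (χ (x - y))` be the Jacobsthal matrix of the quadratic character and `J` the all-ones
matrix. Since `q ≡ 1 mod 4`, `χ (-1) = 1`, so `C` is symmetric, and the Jacobi sum
`J(χ, χ) = -χ(-1)` gives `C² = q I - J`, while `CJ = JC = 0`. For `r = √q` the matrices
`S± = r I ± C - J / r` therefore satisfy `S±² = 2r S±`, so they are positive semidefinite.
The primal matrix `(S₋ + (1 + 1/r) J) / (q (1 + r)) = (r I - C + J) / (q (1 + r))` vanishes on the
edges (where `χ = 1`), has trace `1` and entry sum `r`. The dual matrix `M = r S₊ / (1 + r)` agrees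
with `r I - J` off the edges, so for every feasible `Y` the Schur product theorem gives
`0 ≤ Σ (M ∘ Y)ᵢⱼ = r tr Y - Σ Yᵢⱼ`, i.e. `Σ Yᵢⱼ ≤ r`.
-/

open Finset Matrix

theorem mul_self_smul_one_add_sub_smul {K A : Type*} [Field K] [Ring A] [Algebra K A]
    {c j : A} {q s : K} (hcc : c * c = q • 1 - j) (hcj : c * j = 0) (hjc : j * c = 0)
    (hjj : j * j = q • j) (hs : s ^ 2 = q) (hs₀ : s ≠ 0) :
    (s • 1 + c - s⁻¹ • j) * (s • 1 + c - s⁻¹ • j) = (2 * s) • (s • 1 + c - s⁻¹ • j) := by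
  subst hs
  simp only [add_mul, mul_add, sub_mul, mul_sub, smul_mul_assoc, mul_smul_comm, one_mul, mul_one,
    hcc, hcj, hjc, hjj, smul_zero]
  match_scalars <;> field_simp <;> ring

namespace Matrix

open scoped ComplexOrder

variable {n 𝕜 : Type*} [Fintype n] [RCLike 𝕜]

theorem IsHermitian.posSemidef_of_mul_self_eq_smul {S : Matrix n n 𝕜} (hS : S.IsHermitian)
    {l : ℝ} (hl : 0 < l) (h : S * S = l • S) : S.PosSemidef := by
  have hS' : S = l⁻¹ • (Sᴴ * S) := by
    rw [hS.eq, h, smul_smul, inv_mul_cancel₀ hl.ne', one_smul]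
  rw [hS']
  exact (posSemidef_conjTranspose_mul_self S).smul (inv_nonneg.mpr hl.le)

theorem PosSemidef.sum_sum_nonneg {A : Matrix n n 𝕜} (hA : A.PosSemidef) :
    0 ≤ ∑ i, ∑ j, A i j := by
  simpa [dotProduct, mulVec, Finset.mul_sum] using hA.dotProduct_mulVec_nonneg 1

theorem posSemidef_ones : (of fun _ _ => 1 : Matrix n n 𝕜).PosSemidef := by
  simpa [vecMulVec] using posSemidef_vecMulVec_self_star (1 : n → 𝕜)

theorem ones_mul_ones : (of fun _ _ => 1 : Matrix n n 𝕜) * of (fun _ _ => 1)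
    = (Fintype.card n : 𝕜) • of fun _ _ => 1 := by
  ext
  simp [mul_apply]

variable [DecidableEq n] [Nonempty n]

theorem posSemidef_sqrt_card_smul_one_add_sub_ones {C : Matrix n n ℝ} (hC : Cᵀ = C)
    (hCC : C * C = (Fintype.card n : ℝ) • 1 - of fun _ _ => 1)
    (hCJ : C * of (fun _ _ => 1) = 0) (hJC : of (fun _ _ => 1) * C = 0) :
    (√(Fintype.card n) • 1 + C - (√(Fintype.card n))⁻¹ • of fun _ _ => 1).PosSemidef := by
  have hq : (0 : ℝ) < Fintype.card n := by exact_mod_cast Fintype.card_pos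
  have hr : 0 < √(Fintype.card n : ℝ) := Real.sqrt_pos.mpr hq
  refine IsHermitian.posSemidef_of_mul_self_eq_smul ?_ (by positivity : (0 : ℝ) < 2 * _)
    (mul_self_smul_one_add_sub_smul hCC hCJ hJC ones_mul_ones (Real.sq_sqrt hq.le) hr.ne')
  ext i j
  have hCij : C j i = C i j := by rw [← transpose_apply C i j, hC]
  simp [hCij, one_apply, eq_comm]

end Matrix

section LovaszTheta

variable {V : Type} [Fintype V] {G : SimpleGraph V}

theorem sum_sum_le_of_posSemidef_certificate {M Y : Matrix V V ℝ} {r : ℝ} (hM : M.PosSemidef)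
    (hMG : ∀ i j, ¬ G.Adj i j → M i j = r * (1 : Matrix V V ℝ) i j - 1)
    (hY : Y.PosSemidef) (hYtr : Y.trace = 1) (hYG : ∀ i j, G.Adj i j → Y i j = 0) :
    ∑ i, ∑ j, Y i j ≤ r := by
  have hMY : ∀ i j, (M ⊙ Y) i j = r * ((1 : Matrix V V ℝ) i j * Y i j) - Y i j := by
    intro i j
    by_cases hij : G.Adj i j
    · simp [hYG i j hij]
    · rw [hadamard_apply, hMG i j hij]
      ring
  have hdiag : ∑ i, ∑ j, (1 : Matrix V V ℝ) i j * Y i j = Y.trace := by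
    simp [one_apply, ite_mul, trace]
  have hSchur := (hM.hadamard hY).sum_sum_nonneg
  simp only [hMY, Finset.sum_sub_distrib, ← Finset.mul_sum, hdiag, hYtr] at hSchur
  linarith

theorem lovaszTheta_eq_of_certificates {X M : Matrix V V ℝ} {r : ℝ}
    (hX : X.PosSemidef) (hXtr : X.trace = 1) (hXG : ∀ i j, G.Adj i j → X i j = 0)
    (hXsum : ∑ i, ∑ j, X i j = r) (hM : M.PosSemidef)
    (hMG : ∀ i j, ¬ G.Adj i j → M i j = r * (1 : Matrix V V ℝ) i j - 1) :
    lovaszTheta G = r := by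
  refine IsGreatest.csSup_eq ⟨⟨X, hX, hXtr, hXG, hXsum.symm⟩, ?_⟩
  rintro t ⟨Y, hY, hYtr, hYG, rfl⟩
  exact sum_sum_le_of_posSemidef_certificate hM hMG hY hYtr hYG

end LovaszTheta

namespace MulChar.IsQuadratic

variable {F R : Type} [Field F] [Fintype F] [CommRing R] {χ : MulChar F R}

theorem sum_mul_apply_neg (hχ : χ.IsQuadratic) :
    ∑ u, χ u * χ (-u) = χ (-1) * (Fintype.card F - 1) := by
  have h : ∀ u, χ u * χ (-u) = χ (-1) * (χ ^ 2) u := fun u => by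
    rw [neg_eq_neg_one_mul, map_mul, pow_apply' χ two_ne_zero]
    ring
  simp only [h, hχ.sq_eq_one, ← Finset.mul_sum, sum_one_eq_card_units,
    Fintype.card_eq_card_units_add_one (α := F), Nat.cast_add, Nat.cast_one, add_sub_cancel_right]

theorem sum_mul_apply_sub_of_ne_zero [IsDomain R] (hχ : χ.IsQuadratic) (hχ₁ : χ ≠ 1) {b : F}
    (hb : b ≠ 0) : ∑ u, χ u * χ (b - u) = -χ (-1) := by
  have hbb : χ b ^ 2 = 1 := by
    rw [← pow_apply' χ two_ne_zero, hχ.sq_eq_one, one_apply (isUnit_iff_ne_zero.mpr hb)]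
  calc ∑ u, χ u * χ (b - u) = ∑ t, χ (b * t) * χ (b - b * t) :=
        (Fintype.sum_equiv (Equiv.mulLeft₀ b hb) _ _ fun _ => rfl).symm
    _ = jacobiSum χ χ := by
        refine Finset.sum_congr rfl fun t _ => ?_
        rw [show b - b * t = b * (1 - t) by ring, map_mul, map_mul]
        linear_combination (χ t * χ (1 - t)) * hbb
    _ = -χ (-1) := by rw [← jacobiSum_nontrivial_inv hχ₁, hχ.inv]

end MulChar.IsQuadratic

section Jacobsthal

variable {F R : Type} [Field F] [CommRing R]

def jacobsthalMatrix (χ : MulChar F R) : Matrix F F R := of fun x y => χ (x - y)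

@[simp]
theorem jacobsthalMatrix_apply (χ : MulChar F R) (x y : F) :
    jacobsthalMatrix χ x y = χ (x - y) := rfl

variable [Fintype F] [IsDomain R] {χ : MulChar F R}

theorem sum_jacobsthalMatrix_apply (hχ : χ ≠ 1) (x : F) : ∑ y, jacobsthalMatrix χ x y = 0 :=
  (Fintype.sum_equiv (Equiv.subLeft x) _ χ fun _ => rfl).trans (MulChar.sum_eq_zero_of_ne_one hχ)

theorem jacobsthalMatrix_mul_ones (hχ : χ ≠ 1) :
    jacobsthalMatrix χ * of (fun _ _ => 1) = 0 := by
  ext x y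
  simpa [mul_apply] using sum_jacobsthalMatrix_apply hχ x

theorem ones_mul_jacobsthalMatrix (hχ : χ ≠ 1) :
    of (fun _ _ => 1) * jacobsthalMatrix χ = 0 := by
  ext x y
  simpa [mul_apply] using
    (Fintype.sum_equiv (Equiv.subRight y) _ χ fun _ => rfl).trans (MulChar.sum_eq_zero_of_ne_one hχ)

theorem jacobsthalMatrix_mul_self (hχ : χ.IsQuadratic) (hχ₁ : χ ≠ 1) :
    jacobsthalMatrix χ * jacobsthalMatrix χ
      = χ (-1) • ((Fintype.card F : R) • (1 : Matrix F F R) - of fun _ _ => 1) := by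
  ext x y
  have hsum : ∑ z, χ (x - z) * χ (z - y) = ∑ u, χ u * χ (x - y - u) :=
    Fintype.sum_equiv (Equiv.subLeft x) _ _ fun z => by simp
  simp only [mul_apply, jacobsthalMatrix_apply, hsum]
  by_cases hxy : x = y
  · simp [hxy, hχ.sum_mul_apply_neg]
  · simp [hxy, hχ.sum_mul_apply_sub_of_ne_zero hχ₁ (sub_ne_zero.mpr hxy)]

end Jacobsthal

theorem quadraticChar_ringHomComp_ne_one {F R : Type} [Field F] [Fintype F] [CommRing R]
    [CharZero R] (hF : ringChar F ≠ 2) (f : ℤ →+* R) : (quadraticChar F).ringHomComp f ≠ 1 :=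
  (MulChar.ringHomComp_ne_one_iff f.injective_int).mpr (quadraticChar_ne_one hF)

noncomputable def Paley.jacobsthal (F : Type) [Field F] [Fintype F] : Matrix F F ℝ :=
  jacobsthalMatrix ((quadraticChar F).ringHomComp (Int.castRingHom ℝ))

namespace Paley

variable {F : Type} [Field F] [Fintype F]

theorem jacobsthal_apply (x y : F) : jacobsthal F x y = quadraticChar F (x - y) := rfl

theorem jacobsthal_apply_self (x : F) : jacobsthal F x x = 0 := by
  simp [jacobsthal_apply]

theorem ringChar_ne_two (hF : Fintype.card F % 4 = 1) : ringChar F ≠ 2 := by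
  intro h
  have := FiniteField.even_card_of_char_two h
  omega

theorem quadraticChar_neg (hF : Fintype.card F % 4 = 1) (a : F) :
    quadraticChar F (-a) = quadraticChar F a := by
  have h : quadraticChar F (-1) = 1 :=
    (quadraticChar_one_iff_isSquare (neg_ne_zero.mpr one_ne_zero)).mpr
      (FiniteField.isSquare_neg_one_iff.mpr (by omega))
  rw [neg_eq_neg_one_mul, map_mul, h, one_mul]

theorem adj_iff (hF : Fintype.card F % 4 = 1) {x y : F} :
    (Paley F).Adj x y ↔ x ≠ y ∧ quadraticChar F (x - y) = 1 := by
  have hsq : ∀ a : F, a ≠ 0 → ((∃ z, z ≠ 0 ∧ a = z ^ 2) ↔ quadraticChar F a = 1) := by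
    intro a ha
    rw [quadraticChar_one_iff_isSquare ha]
    refine ⟨fun ⟨z, _, hz⟩ => ⟨z, hz.trans (sq z)⟩, fun ⟨z, hz⟩ => ⟨z, ?_, hz.trans (sq z).symm⟩⟩
    rintro rfl
    exact ha (by simpa using hz)
  rw [Paley, SimpleGraph.fromRel_adj]
  refine and_congr_right fun hxy => ?_
  rw [hsq _ (sub_ne_zero.mpr hxy), hsq _ (sub_ne_zero.mpr hxy.symm), ← neg_sub,
    quadraticChar_neg hF, or_self]

theorem jacobsthal_apply_of_adj (hF : Fintype.card F % 4 = 1) {x y : F}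
    (h : (Paley F).Adj x y) : jacobsthal F x y = 1 := by
  simp [jacobsthal_apply, ((adj_iff hF).mp h).2]

theorem jacobsthal_apply_of_not_adj (hF : Fintype.card F % 4 = 1) {x y : F} (hxy : x ≠ y)
    (h : ¬ (Paley F).Adj x y) : jacobsthal F x y = -1 := by
  have hχ : quadraticChar F (x - y) = -1 :=
    (quadraticChar_dichotomy (sub_ne_zero.mpr hxy)).resolve_left
      fun h' => h ((adj_iff hF).mpr ⟨hxy, h'⟩)
  simp [jacobsthal_apply, hχ]

theorem jacobsthal_transpose (hF : Fintype.card F % 4 = 1) : (jacobsthal F)ᵀ = jacobsthal F := by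
  ext x y
  rw [transpose_apply, jacobsthal_apply, jacobsthal_apply, ← neg_sub, quadraticChar_neg hF]

theorem sum_jacobsthal_apply (hF : ringChar F ≠ 2) (x : F) : ∑ y, jacobsthal F x y = 0 :=
  sum_jacobsthalMatrix_apply (quadraticChar_ringHomComp_ne_one hF _) x

theorem jacobsthal_mul_self (hF : Fintype.card F % 4 = 1) :
    jacobsthal F * jacobsthal F = (Fintype.card F : ℝ) • 1 - of fun _ _ => 1 := by
  rw [jacobsthal, jacobsthalMatrix_mul_self ((quadraticChar_isQuadratic F).comp _)
    (quadraticChar_ringHomComp_ne_one (ringChar_ne_two hF) _)]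
  simp [quadraticChar_neg hF 1]

theorem posSemidef_sqrt_card_smul_one_add_smul_jacobsthal_sub_ones
    (hF : Fintype.card F % 4 = 1) {s : ℝ} (hs : s ^ 2 = 1) :
    (√(Fintype.card F) • 1 + s • jacobsthal F - (√(Fintype.card F))⁻¹ • of fun _ _ => 1
      : Matrix F F ℝ).PosSemidef := by
  have hχ₁ := quadraticChar_ringHomComp_ne_one (ringChar_ne_two hF) (Int.castRingHom ℝ)
  refine posSemidef_sqrt_card_smul_one_add_sub_ones ?_ ?_ ?_ ?_
  · rw [transpose_smul, jacobsthal_transpose hF]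
  · rw [smul_mul_smul, ← sq, hs, one_smul, jacobsthal_mul_self hF]
  · rw [smul_mul_assoc, jacobsthal, jacobsthalMatrix_mul_ones hχ₁, smul_zero]
  · rw [mul_smul_comm, jacobsthal, ones_mul_jacobsthalMatrix hχ₁, smul_zero]

theorem lovaszTheta_eq_sqrt_card (hF : Fintype.card F % 4 = 1) :
    lovaszTheta (Paley F) = √(Fintype.card F) := by
  have hSplus :=
    posSemidef_sqrt_card_smul_one_add_smul_jacobsthal_sub_ones hF (s := 1) (by norm_num)
  have hSminus :=
    posSemidef_sqrt_card_smul_one_add_smul_jacobsthal_sub_ones hF (s := -1) (by norm_num)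
  set r := √(Fintype.card F : ℝ)
  have hq : (0 : ℝ) < Fintype.card F := by simp [Fintype.card_pos]
  have hr : 0 < r := Real.sqrt_pos.mpr hq
  have hrq : (Fintype.card F : ℝ) = r ^ 2 := (Real.sq_sqrt hq.le).symm
  have hX := (hSminus.add (posSemidef_ones.smul (by positivity : 0 ≤ 1 + r⁻¹))).smul
    (by positivity : 0 ≤ (r ^ 2 * (1 + r))⁻¹)
  have hM := hSplus.smul (by positivity : 0 ≤ r / (1 + r))
  refine lovaszTheta_eq_of_certificates hX ?_ ?_ ?_ hM ?_ <;>
    simp only [trace, diag_apply, Matrix.smul_apply, Matrix.add_apply, Matrix.sub_apply, of_apply,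
      smul_eq_mul]
  · simp only [one_apply_eq, jacobsthal_apply_self, Finset.sum_const, card_univ, nsmul_eq_mul, hrq]
    field_simp
    ring
  · intro i j h
    rw [one_apply_ne h.ne, jacobsthal_apply_of_adj hF h]
    ring
  · simp only [one_apply, Finset.sum_add_distrib, Finset.sum_sub_distrib, ← Finset.mul_sum,
      Finset.sum_ite_eq, Finset.mem_univ, if_true, sum_jacobsthal_apply (ringChar_ne_two hF),
      Finset.sum_const, card_univ, nsmul_eq_mul, hrq]
    field_simp
    ring
  · intro i j h
    by_cases hij : i = j
    · rw [hij, one_apply_eq, jacobsthal_apply_self]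
      field_simp
      ring
    · rw [one_apply_ne hij, jacobsthal_apply_of_not_adj hF hij h]
      field_simp
      ring

end Paley

theorem stmt7 (q : ℕ) (F : Type) [Field F] [Fintype F]
    (hcard : Fintype.card F = q) (hq : q % 4 = 1) :
    lovaszTheta (Paley F) = Real.sqrt q := by
  subst hcard
  exact Paley.lovaszTheta_eq_sqrt_card hq
end

section
/- Let P_q be a Paley graph with q ≥ 9, let k ∈ N with k ≤ (√q + 3)/2, let X* be the matrix with diagonal entries 1/√q, zero on edges and 2/(q+√q) on non-edges, and let I be any set of k vertices. Then the principal submatrix X*_I lies in the squared stable set polytope STAB²(P_{q,I}) of the subgraph induced by I; i.e., X*_I is a convex combination of outer products ssᵀ of incidence vectors s of stable sets of the induced subgraph. -/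
open scoped Classical

/-- The squared stable set polytope STAB²(H): the convex hull of the outer
products ssᵀ of incidence vectors s of stable sets of H. -/
def stab2 {W : Type} (H : SimpleGraph W) : Set (Matrix W W ℝ) :=
  convexHull ℝ {M | ∃ s : W → ℝ, (∀ i, s i = 0 ∨ s i = 1) ∧
    (∀ i j, H.Adj i j → s i * s j = 0) ∧ M = Matrix.vecMulVec s s}

/-- The matrix X* with diagonal 1/√q, zero on edges of the Paley graph and
2/(q+√q) on non-edges. -/
noncomputable def Xstar (F : Type) [Field F] (q : ℕ) : Matrix F F ℝ :=
  Matrix.of fun i j =>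
    if i = j then 1 / Real.sqrt q
    else if (Paley F).Adj i j then 0 else 2 / (q + Real.sqrt q)

/-! The matrix `a • 1 + b • A(Hᶜ)` equals
`∑ᵢ (a - b · deg_{Hᶜ} i) eᵢeᵢᵀ + ∑_{uv ∈ E(Hᶜ)} b (eᵤ + eᵥ)(eᵤ + eᵥ)ᵀ`,
a nonnegative combination of outer products of stable sets of `H` (singletons and non-edges)
of total weight `n a - b |E(Hᶜ)|`. As `0` is such an outer product too, total weight at most `1`
suffices for membership in `STAB²(H)`. For `X*_I` we have `n = k`, `a = 1/√q`, `b = 2/(q + √q)`,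
and the conditions `b (k - 1) ≤ a` and `k a ≤ 1` become `k ≤ (√q + 3)/2` and `k ≤ √q`; the
second follows from the first once `q ≥ 9`. -/

open Finset Matrix SimpleGraph

theorem sum_smul_mem_convexHull_of_zero_mem {ι E : Type*} [AddCommGroup E] [Module ℝ E]
    {s : Set E} (h0 : 0 ∈ s) (t : Finset ι) {w : ι → ℝ} {z : ι → E}
    (hw₀ : ∀ i ∈ t, 0 ≤ w i) (hws : ∑ i ∈ t, w i ≤ 1) (hz : ∀ i ∈ t, z i ∈ s) :
    ∑ i ∈ t, w i • z i ∈ convexHull ℝ s := by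
  rcases (sum_nonneg hw₀).eq_or_lt with hzero | hpos
  · rw [sum_eq_zero fun i hi => by
      rw [(sum_eq_zero_iff_of_nonneg hw₀).1 hzero.symm i hi, zero_smul]]
    exact subset_convexHull ℝ s h0
  · have hcm := t.centerMass_mem_convexHull hw₀ hpos hz
    have hstar := (convex_convexHull ℝ s).starConvex (subset_convexHull ℝ s h0)
    simpa [centerMass, smul_smul, hpos.ne'] using hstar.smul_mem hcm hpos.le hws

section

variable {V : Type}

def stableOuterProducts (H : SimpleGraph V) : Set (Matrix V V ℝ) :=
  {M | ∃ s : V → ℝ, (∀ i, s i = 0 ∨ s i = 1) ∧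
    (∀ i j, H.Adj i j → s i * s j = 0) ∧ M = vecMulVec s s}

theorem stab2_eq_convexHull (H : SimpleGraph V) :
    stab2 H = convexHull ℝ (stableOuterProducts H) := rfl

noncomputable def indicatorOuter (s : Set V) : Matrix V V ℝ :=
  vecMulVec (s.indicator 1) (s.indicator 1)

theorem indicatorOuter_apply (s : Set V) (x y : V) :
    indicatorOuter s x y = if x ∈ s ∧ y ∈ s then 1 else 0 := by
  by_cases hx : x ∈ s <;> by_cases hy : y ∈ s <;> simp [indicatorOuter, vecMulVec_apply, hx, hy]

theorem indicatorOuter_mem_stableOuterProducts {H : SimpleGraph V} {s : Set V}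
    (hs : H.IsIndepSet s) : indicatorOuter s ∈ stableOuterProducts H := by
  refine ⟨s.indicator 1, fun i => ?_, fun i j hij => ?_, rfl⟩
  · by_cases hi : i ∈ s <;> simp [hi]
  · by_cases hi : i ∈ s
    · by_cases hj : j ∈ s
      · exact absurd hij (hs hi hj (H.ne_of_adj hij))
      · simp [hj]
    · simp [hi]

theorem zero_mem_stableOuterProducts (H : SimpleGraph V) :
    (0 : Matrix V V ℝ) ∈ stableOuterProducts H :=
  ⟨0, fun _ => .inl rfl, fun _ _ _ => zero_mul _, (zero_vecMulVec _).symm⟩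

theorem isIndepSet_of_mem_edgeSet_compl {H : SimpleGraph V} {e : Sym2 V}
    (he : e ∈ Hᶜ.edgeSet) :
    H.IsIndepSet (e : Set V) := by
  intro x hx y hy hxy hadj
  rw [(Sym2.mem_and_mem_iff hxy).1 ⟨hx, hy⟩, mem_edgeSet, compl_adj] at he
  exact he.2 hadj

variable [Fintype V]

theorem sum_indicatorOuter_edgeFinset_apply (G : SimpleGraph V) [DecidableRel G.Adj]
    [Fintype G.edgeSet] (x y : V) :
    ∑ e ∈ G.edgeFinset, indicatorOuter (e : Set V) x y =
      if x = y then (G.degree x : ℝ) else G.adjMatrix ℝ x y := by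
  simp only [indicatorOuter_apply, SetLike.mem_coe]
  split_ifs with hxy
  · subst hxy
    simp [← incidenceFinset_eq_filter]
  · simp_rw [Sym2.mem_and_mem_iff hxy]
    simp [adjMatrix_apply]

theorem smul_one_add_smul_adjMatrix_eq [DecidableEq V] (G : SimpleGraph V) [DecidableRel G.Adj]
    [Fintype G.edgeSet] (a b : ℝ) :
    a • (1 : Matrix V V ℝ) + b • G.adjMatrix ℝ =
      ∑ i, (a - b * G.degree i) • indicatorOuter {i} +
        ∑ e ∈ G.edgeFinset, b • indicatorOuter (e : Set V) := by
  ext x y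
  have hsingle : ∑ i, (a - b * G.degree i) * indicatorOuter {i} x y =
      if x = y then a - b * G.degree x else 0 := by
    simp [indicatorOuter_apply, ite_and, eq_comm]
  simp only [Matrix.add_apply, Matrix.smul_apply, Matrix.sum_apply, smul_eq_mul, hsingle,
    ← mul_sum, sum_indicatorOuter_edgeFinset_apply, one_apply]
  split_ifs with hxy
  · subst hxy; simp
  · simp

theorem smul_one_add_smul_adjMatrix_compl_mem_stab2 [DecidableEq V] (H : SimpleGraph V) {a b : ℝ}
    (hb : 0 ≤ b)
    (hdeg : ∀ i, b * Hᶜ.degree i ≤ a) (hsum : Fintype.card V * a - b * #Hᶜ.edgeFinset ≤ 1) :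
    a • (1 : Matrix V V ℝ) + b • Hᶜ.adjMatrix ℝ ∈ stab2 H := by
  let w : V ⊕ Sym2 V → ℝ := Sum.elim (fun i => a - b * Hᶜ.degree i) fun _ => b
  let z : V ⊕ Sym2 V → Matrix V V ℝ :=
    Sum.elim (fun i => indicatorOuter {i}) fun e => indicatorOuter e
  have hdecomp : a • (1 : Matrix V V ℝ) + b • Hᶜ.adjMatrix ℝ =
      ∑ t ∈ univ.disjSum Hᶜ.edgeFinset, w t • z t := by
    rw [sum_disjSum, smul_one_add_smul_adjMatrix_eq]
    rfl
  have hweights :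
      ∑ t ∈ univ.disjSum Hᶜ.edgeFinset, w t = Fintype.card V * a - b * #Hᶜ.edgeFinset := by
    have := congrArg (Nat.cast (R := ℝ)) (Hᶜ.sum_degrees_eq_twice_card_edges)
    push_cast at this
    simp only [sum_disjSum, w, Sum.elim_inl, Sum.elim_inr, sum_sub_distrib, ← mul_sum, this,
      sum_const, card_univ, nsmul_eq_mul]
    ring
  rw [hdecomp, stab2_eq_convexHull]
  refine sum_smul_mem_convexHull_of_zero_mem (zero_mem_stableOuterProducts H) _ ?_
    (hweights ▸ hsum) ?_
  · rintro (i | e) _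
    · exact sub_nonneg.2 (hdeg i)
    · exact hb
  · rintro (i | e) ht
    · exact indicatorOuter_mem_stableOuterProducts (Set.pairwise_singleton i _)
    · exact indicatorOuter_mem_stableOuterProducts
        (isIndepSet_of_mem_edgeSet_compl (mem_edgeFinset.1 (by simpa using ht)))

theorem smul_one_add_smul_adjMatrix_compl_mem_stab2_of_card [DecidableEq V] (H : SimpleGraph V)
    {a b : ℝ} (hb : 0 ≤ b) (hdeg : b * (Fintype.card V - 1) ≤ a) (hcard : Fintype.card V * a ≤ 1) :
    a • (1 : Matrix V V ℝ) + b • Hᶜ.adjMatrix ℝ ∈ stab2 H := by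
  refine smul_one_add_smul_adjMatrix_compl_mem_stab2 H hb (fun i => ?_) ?_
  · have : (Hᶜ.degree i : ℝ) + 1 ≤ Fintype.card V := by
      exact_mod_cast Hᶜ.degree_lt_card_verts i
    nlinarith
  · have : 0 ≤ b * #Hᶜ.edgeFinset := by positivity
    linarith

end

theorem Xstar_submatrix_eq (F : Type) [Field F] (q : ℕ) (I : Set F) :
    (Xstar F q).submatrix (fun a : I => (a : F)) (fun a : I => (a : F)) =
      (1 / Real.sqrt q) • (1 : Matrix I I ℝ) +
        (2 / (q + Real.sqrt q)) • ((Paley F).induce I)ᶜ.adjMatrix ℝ := by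
  ext i j
  by_cases hij : i = j
  · simp [Xstar, hij]
  · have hij' : (i : F) ≠ j := fun h => hij (Subtype.ext h)
    by_cases hadj : (Paley F).Adj i j <;> simp [Xstar, hij, hij', hadj]

theorem stmt11_general (q : ℕ) (F : Type) [Field F] (hq9 : 9 ≤ q)
    (k : ℕ) (hk : (k : ℝ) ≤ (Real.sqrt q + 3) / 2)
    (I : Finset F) (hI : I.card = k) :
    (Xstar F q).submatrix (fun a : (I : Set F) => (a : F)) (fun a : (I : Set F) => (a : F)) ∈
      stab2 ((Paley F).induce (I : Set F)) := by
  have hr : 3 ≤ Real.sqrt q := Real.le_sqrt_of_sq_le (by norm_num; exact_mod_cast hq9)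
  have hrq : Real.sqrt q ^ 2 = q := Real.sq_sqrt q.cast_nonneg
  have hcardI : Fintype.card (I : Set F) = k := by simp [hI]
  have hqr : 0 < (q : ℝ) + Real.sqrt q := by positivity
  rw [Xstar_submatrix_eq]
  refine smul_one_add_smul_adjMatrix_compl_mem_stab2_of_card ((Paley F).induce (I : Set F))
    (div_nonneg zero_le_two hqr.le) ?_ ?_ <;>
    rw [hcardI]
  · rw [div_mul_eq_mul_div, div_le_div_iff₀ hqr (by linarith)]
    nlinarith
  · rw [mul_one_div, div_le_one (by linarith)]
    linarith

theorem stmt11 (q : ℕ) (F : Type) [Field F] [Fintype F]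
    (hcard : Fintype.card F = q) (hq : q % 4 = 1) (hq9 : 9 ≤ q)
    (k : ℕ) (hk : (k : ℝ) ≤ (Real.sqrt q + 3) / 2)
    (I : Finset F) (hI : I.card = k) :
    (Xstar F q).submatrix (fun a : (I : Set F) => (a : F)) (fun a : (I : Set F) => (a : F)) ∈
      stab2 ((Paley F).induce (I : Set F)) :=
  stmt11_general q F hq9 k hk I hI
end

section
/- Let G be a vertex-transitive r-regular graph on n vertices with local graph G^L (the subgraph induced by the non-neighbors of a fixed vertex, excluding the vertex itself). Then for all k ∈ N₀, the k-th level of the vertex-transitive exact subgraph hierarchy satisfies z'_k(G) = 1 + z_k(G^L) ≤ z_k(G). -/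
open scoped Classical


/-- Feasibility for the SDP formulation ϑ₁:
max 1ᵀx s.t. [[X, x],[xᵀ,1]] ⪰ 0, diag(X) = x, X_{ij} = 0 on edges. -/
def Theta1Feasible {V : Type} [Fintype V] (G : SimpleGraph V)
    (x : V → ℝ) (X : Matrix V V ℝ) : Prop :=
  (Matrix.fromBlocks X (Matrix.of fun i (_ : Unit) => x i)
      (Matrix.of fun (_ : Unit) j => x j) 1).PosSemidef ∧
  (∀ i, X i i = x i) ∧ (∀ i j, G.Adj i j → X i j = 0)

/-- The optimal value z_J(G) of the ϑ₁ SDP with the exact subgraph constraint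
added for every vertex subset I ∈ J. -/
noncomputable def zJ {V : Type} [Fintype V] (G : SimpleGraph V) (J : Set (Set V)) : ℝ :=
  sSup {t | ∃ (x : V → ℝ) (X : Matrix V V ℝ), Theta1Feasible G x X ∧
    (∀ I ∈ J, X.submatrix (fun a : I => (a : V)) (fun a : I => (a : V)) ∈
      stab2 (G.induce I)) ∧
    t = ∑ i, x i}

/-- The k-th level z_k(G) of the exact subgraph hierarchy: exact subgraph
constraints for all k-element vertex subsets (with the convention
z_k(G) = z_n(G) for k > n). -/
noncomputable def zk {V : Type} [Fintype V] (G : SimpleGraph V) (k : ℕ) : ℝ :=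
  zJ G {I : Set V | I.ncard = min k (Fintype.card V)}

/-!
A feasible solution `(x, X)` for the local graph on `W = V \ N[v0]` extends to one for `G` whose
value is larger by one: `v0` copies the apex of `[[X, x], [xᵀ, 1]]`, the vertices of `W` keep their
rows and the neighbours of `v0` get zero rows. This is a congruence of the augmented matrix, so it
preserves positive semidefiniteness. Since `v0` has no neighbour in `W`, it turns the outer
product of a stable set `S` of the local graph into that of the stable set `S ∪ {v0}` of `G`; by
convexity it therefore carries the exact subgraph constraint on a `k`-subset of `W` containing
`I ∩ W` to the constraint on `I`.
-/

namespace Matrix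

variable {ι κ R : Type*}

def partialSubmatrix [Zero R] (M : Matrix ι ι R) (σ : κ → Option ι) : Matrix κ κ R :=
  fun a b => (σ a).elim 0 fun i => (σ b).elim 0 fun j => M i j

lemma partialSubmatrix_eq_mul [Fintype ι] [DecidableEq ι] [CommRing R] [StarRing R]
    (M : Matrix ι ι R) (σ : κ → Option ι) [Fintype κ] :
    M.partialSubmatrix σ =
      (of fun i a => if σ a = some i then (1 : R) else 0)ᴴ * M *
        of fun i a => if σ a = some i then (1 : R) else 0 := by
  ext a b
  rcases ha : σ a with _ | i <;> rcases hb : σ b with _ | j <;>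
    simp [partialSubmatrix, mul_apply, ha, hb, apply_ite star]

lemma PosSemidef.partialSubmatrix [Finite κ] [Fintype ι] [CommRing R] [PartialOrder R]
    [StarRing R] {M : Matrix ι ι R} (hM : M.PosSemidef) (σ : κ → Option ι) :
    (M.partialSubmatrix σ).PosSemidef := by
  classical
  have := Fintype.ofFinite κ
  rw [partialSubmatrix_eq_mul]
  exact hM.conjTranspose_mul_mul_same _

lemma partialSubmatrix_vecMulVec [CommRing R] (u : ι → R) (σ : κ → Option ι) :
    (vecMulVec u u).partialSubmatrix σ =
      vecMulVec (fun a => (σ a).elim 0 u) (fun a => (σ a).elim 0 u) := by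
  ext a b
  rcases ha : σ a with _ | i <;> rcases hb : σ b with _ | j <;>
    simp [partialSubmatrix, vecMulVec_apply, ha, hb]

end Matrix

open Matrix

variable {ι κ : Type}

def augment (x : ι → ℝ) (X : Matrix ι ι ℝ) : Matrix (ι ⊕ Unit) (ι ⊕ Unit) ℝ :=
  fromBlocks X (of fun i (_ : Unit) => x i) (of fun (_ : Unit) j => x j) 1

lemma augment_vecMulVec (s : ι → ℝ) :
    augment s (vecMulVec s s) = vecMulVec (Sum.elim s 1) (Sum.elim s 1) := by
  ext (i | _) (j | _) <;> simp [augment, vecMulVec_apply]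

def IsPartialHom (σ : κ → Option ι) (G : SimpleGraph κ) (H : SimpleGraph ι) : Prop :=
  ∀ ⦃a b i j⦄, G.Adj a b → σ a = some i → σ b = some j → H.Adj i j

lemma IsPartialHom.partialSubmatrix_eq_zero {R : Type*} [Zero R] {σ : κ → Option ι}
    {G : SimpleGraph κ} {H : SimpleGraph ι} (hσ : IsPartialHom σ G H) {M : Matrix ι ι R}
    (hM : ∀ i j, H.Adj i j → M i j = 0) {a b : κ} (hab : G.Adj a b) :
    M.partialSubmatrix σ a b = 0 := by
  rcases ha : σ a with _ | i
  · simp [partialSubmatrix, ha]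
  rcases hb : σ b with _ | j
  · simp [partialSubmatrix, ha, hb]
  simpa [partialSubmatrix, ha, hb] using hM i j (hσ hab ha hb)

def IsStableIndicator (H : SimpleGraph ι) (s : ι → ℝ) : Prop :=
  (∀ i, s i = 0 ∨ s i = 1) ∧ ∀ i j, H.Adj i j → s i * s j = 0

namespace IsStableIndicator

variable {H : SimpleGraph ι} {s : ι → ℝ}

lemma mul_self (hs : IsStableIndicator H s) (i : ι) : s i * s i = s i := by
  rcases hs.1 i with h | h <;> simp [h]

lemma partialComp {σ : κ → Option ι} {G : SimpleGraph κ} (hσ : IsPartialHom σ G H)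
    (hs : IsStableIndicator H s) : IsStableIndicator G fun a => (σ a).elim 0 s := by
  refine ⟨fun a => ?_, fun a b hab => ?_⟩
  · rcases ha : σ a with _ | i
    · simp [ha]
    · simpa [ha] using hs.1 i
  · rcases ha : σ a with _ | i
    · simp [ha]
    rcases hb : σ b with _ | j
    · simp [hb]
    simpa [ha, hb] using hs.2 i j (hσ hab ha hb)

lemma sum_elim_one (hs : IsStableIndicator H s) :
    IsStableIndicator (H ⊕g (⊥ : SimpleGraph Unit)) (Sum.elim s 1) := by
  refine ⟨fun i => ?_, fun i j hij => ?_⟩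
  · rcases i with i | _
    · exact hs.1 i
    · simp
  · rcases i with i | _ <;> rcases j with j | _ <;> simp at hij
    exact hs.2 i j hij

lemma vecMulVec_mem_stab2 (hs : IsStableIndicator H s) : vecMulVec s s ∈ stab2 H :=
  subset_convexHull ℝ _ ⟨s, hs.1, hs.2, rfl⟩

end IsStableIndicator

lemma stab2_subset {H : SimpleGraph ι} {S : Set (Matrix ι ι ℝ)} (hS : Convex ℝ S)
    (h : ∀ s, IsStableIndicator H s → vecMulVec s s ∈ S) : stab2 H ⊆ S :=
  convexHull_min (by rintro _ ⟨s, h01, hst, rfl⟩; exact h s ⟨h01, hst⟩) hS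

section Lift

/- The lift along `ρ` lets `a` copy vertex `i` of `augment x X` if `ρ a = some (inl i)`, copy the
apex row `[xᵀ, 1]` if `ρ a = some (inr ())`, and be zero if `ρ a = none`. -/

variable (ρ : κ → Option (ι ⊕ Unit))

def liftVec (x : ι → ℝ) : κ → ℝ := fun a => (ρ a).elim 0 (Sum.elim x 1)

def liftMat (x : ι → ℝ) (X : Matrix ι ι ℝ) : Matrix κ κ ℝ := (augment x X).partialSubmatrix ρ

lemma augment_liftVec_liftMat (x : ι → ℝ) (X : Matrix ι ι ℝ) :
    augment (liftVec ρ x) (liftMat ρ x X) =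
      (augment x X).partialSubmatrix (Sum.elim ρ fun _ => some (Sum.inr ())) := by
  have hcol : Sum.elim x 1 = fun p => augment x X p (Sum.inr ()) := by
    ext (i | _) <;> simp [augment]
  have hrow : Sum.elim x 1 = fun p => augment x X (Sum.inr ()) p := by
    ext (i | _) <;> simp [augment]
  ext (a | _) (b | _)
  · rfl
  · simp [augment, liftVec, liftMat, partialSubmatrix, hcol]
  · simp [augment, liftVec, liftMat, partialSubmatrix, hrow]
  · simp [augment, partialSubmatrix]

variable {ρ}

theorem Theta1Feasible.lift [Fintype ι] [Fintype κ] {G : SimpleGraph κ} {H : SimpleGraph ι}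
    {x : ι → ℝ} {X : Matrix ι ι ℝ} (h : Theta1Feasible H x X)
    (hρ : IsPartialHom ρ G (H ⊕g (⊥ : SimpleGraph Unit))) :
    Theta1Feasible G (liftVec ρ x) (liftMat ρ x X) := by
  obtain ⟨hpsd, hdiag, hedge⟩ := h
  refine ⟨?_, fun a => ?_, fun a b hab => ?_⟩
  · rw [← augment, augment_liftVec_liftMat]
    exact hpsd.partialSubmatrix _
  · rcases ha : ρ a with _ | (i | _) <;>
      simp [augment, liftVec, liftMat, partialSubmatrix, ha, hdiag]
  · refine hρ.partialSubmatrix_eq_zero (fun p q hpq => ?_) hab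
    rcases p with i | _ <;> rcases q with j | _ <;> simp at hpq
    exact hedge i j hpq

lemma liftMat_convexComb (Y Z : Matrix ι ι ℝ) {a b : ℝ} (hab : a + b = 1) :
    liftMat ρ (fun i => (a • Y + b • Z) i i) (a • Y + b • Z) =
      a • liftMat ρ (fun i => Y i i) Y + b • liftMat ρ (fun i => Z i i) Z := by
  ext c d
  rcases hc : ρ c with _ | (i | _) <;> rcases hd : ρ d with _ | (j | _) <;>
    simp [liftMat, partialSubmatrix, augment, hc, hd, hab]

lemma liftMat_vecMulVec {H : SimpleGraph ι} {s : ι → ℝ} (hs : IsStableIndicator H s) :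
    liftMat ρ (fun i => vecMulVec s s i i) (vecMulVec s s) =
      vecMulVec (liftVec ρ s) (liftVec ρ s) := by
  have hdiag : (fun i => vecMulVec s s i i) = s := funext fun i => by
    simpa [vecMulVec_apply] using hs.mul_self i
  rw [hdiag, liftMat, augment_vecMulVec, partialSubmatrix_vecMulVec]
  rfl

/- `Y ↦ liftMat ρ (diag Y) Y` is affine and sends the outer product of a stable set of `H` to
that of its lift, a stable set of `G`. -/
theorem liftMat_mem_stab2 {G : SimpleGraph κ} {H : SimpleGraph ι}
    (hρ : IsPartialHom ρ G (H ⊕g (⊥ : SimpleGraph Unit))) {Y : Matrix ι ι ℝ}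
    (hY : Y ∈ stab2 H) : liftMat ρ (fun i => Y i i) Y ∈ stab2 G := by
  refine stab2_subset (S := {Y | liftMat ρ (fun i => Y i i) Y ∈ stab2 G}) ?_ ?_ hY
  · intro Y hY Z hZ a b ha hb hab
    simp only [Set.mem_ofPred_eq, liftMat_convexComb Y Z hab]
    exact convex_convexHull ℝ _ hY hZ ha hb hab
  · intro s hs
    rw [Set.mem_ofPred_eq, liftMat_vecMulVec hs]
    exact (hs.sum_elim_one.partialComp hρ).vecMulVec_mem_stab2

end Lift

section Restrict

variable {ι' : Type} (e : ι' → ι)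

lemma liftMat_map (ρ : κ → Option (ι' ⊕ Unit)) (x : ι → ℝ) (X : Matrix ι ι ℝ) :
    liftMat (fun a => (ρ a).map (Sum.map e id)) x X = liftMat ρ (x ∘ e) (X.submatrix e e) := by
  ext a b
  rcases ha : ρ a with _ | (i | _) <;> rcases hb : ρ b with _ | (j | _) <;>
    simp [liftMat, partialSubmatrix, augment, ha, hb]

variable {e}

lemma IsPartialHom.of_map {ρ : κ → Option (ι' ⊕ Unit)} {G : SimpleGraph κ} {H : SimpleGraph ι}
    (hρ : IsPartialHom (fun a => (ρ a).map (Sum.map e id)) G (H ⊕g (⊥ : SimpleGraph Unit))) :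
    IsPartialHom ρ G (H.comap e ⊕g (⊥ : SimpleGraph Unit)) := by
  intro a b p q hab ha hb
  have := hρ (i := Sum.map e id p) (j := Sum.map e id q) hab (by simp [ha]) (by simp [hb])
  rcases p with i | _ <;> rcases q with j | _ <;> simp at this ⊢
  exact this

lemma exists_map_val_eq {S : Set ι} (ρ : κ → Option (ι ⊕ Unit))
    (hρ : ∀ a i, ρ a = some (Sum.inl i) → i ∈ S) :
    ∃ ρ' : κ → Option (S ⊕ Unit), ∀ a, ρ a = (ρ' a).map (Sum.map (↑) id) := by
  have : ∀ a, ∃ p : Option (S ⊕ Unit), ρ a = p.map (Sum.map (↑) id) := by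
    intro a
    rcases ha : ρ a with _ | (i | u)
    · exact ⟨none, rfl⟩
    · exact ⟨some (Sum.inl ⟨i, hρ a i ha⟩), rfl⟩
    · exact ⟨some (Sum.inr u), rfl⟩
  choose ρ' hρ' using this
  exact ⟨ρ', hρ'⟩

end Restrict

section LocalRole

variable {V : Type} (W : Set V) (v0 : V)

noncomputable def localRole (v : V) : Option (W ⊕ Unit) :=
  if h : v ∈ W then some (Sum.inl ⟨v, h⟩) else if v = v0 then some (Sum.inr ()) else none

variable {W v0}

lemma isPartialHom_localRole {G : SimpleGraph V} (hW : ∀ w ∈ W, ¬ G.Adj v0 w) :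
    IsPartialHom (localRole W v0) G (G.induce W ⊕g (⊥ : SimpleGraph Unit)) := by
  intro a b p q hab ha hb
  unfold localRole at ha hb
  split_ifs at ha hb <;> cases ha <;> cases hb <;> simp_all
  exact hW a ‹_› hab.symm

lemma coe_eq_of_localRole_eq_some_inl {v : V} {w : W}
    (h : localRole W v0 v = some (Sum.inl w)) : (w : V) = v := by
  unfold localRole at h
  split_ifs at h <;> cases h
  rfl

lemma sum_liftVec_localRole [Fintype V] [Fintype W] (hv0 : v0 ∉ W) (x : W → ℝ) :
    ∑ v, liftVec (localRole W v0) x v = 1 + ∑ w, x w := by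
  rw [← Fintype.sum_subtype_add_sum_subtype (· ∈ W), add_comm]
  congr 1
  · rw [Fintype.sum_eq_single ⟨v0, hv0⟩ fun v hv => ?_]
    · simp [liftVec, localRole, hv0]
    · have : (v : V) ≠ v0 := fun h => hv (Subtype.ext h)
      simp [liftVec, localRole, v.2, this]
  · congr 1
    · congr!
    · funext w
      unfold liftVec localRole
      rw [dif_pos w.2]
      rfl

end LocalRole

lemma exists_preimage_val_subset_ncard_eq {V : Type} [Fintype V] {W I : Set V} [Fintype W]
    {k : ℕ} (hI : I.ncard = min k (Fintype.card V)) :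
    ∃ I' : Set W, (↑) ⁻¹' I ⊆ I' ∧ I'.ncard = min k (Fintype.card W) := by
  have hpre : ((↑) ⁻¹' I : Set W).ncard ≤ I.ncard :=
    Set.ncard_le_ncard_of_injOn _ (fun _ h => h) Subtype.val_injective.injOn
  have hW : ((↑) ⁻¹' I : Set W).ncard ≤ Fintype.card W :=
    (Set.ncard_le_card _).trans_eq (Nat.card_eq_fintype_card)
  obtain ⟨I', hsub, -, hcard⟩ := Set.exists_subsuperset_card_eq (Set.subset_univ _)
    (le_min (hpre.trans (hI.trans_le (min_le_left _ _))) hW)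
    (by simp [Nat.card_eq_fintype_card])
  exact ⟨I', hsub, hcard⟩

section ExactSubgraph

variable {V : Type} [Fintype V]

def ExactSubgraphFeasible (G : SimpleGraph V) (J : Set (Set V)) (x : V → ℝ)
    (X : Matrix V V ℝ) : Prop :=
  Theta1Feasible G x X ∧
    ∀ I ∈ J, X.submatrix (fun a : I => (a : V)) (fun a : I => (a : V)) ∈ stab2 (G.induce I)

lemma Theta1Feasible.le_one {G : SimpleGraph V} {x : V → ℝ} {X : Matrix V V ℝ}
    (h : Theta1Feasible G x X) (i : V) : x i ≤ 1 := by
  classical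
  have := h.1.dotProduct_mulVec_nonneg (Sum.elim (Pi.single i 1) (fun _ => -1))
  simp [dotProduct, mulVec, Fintype.sum_sum_type, fromBlocks, Pi.single_apply, h.2.1 i] at this
  linarith

lemma IsStableIndicator.exactSubgraphFeasible {G : SimpleGraph V} {s : V → ℝ}
    (hs : IsStableIndicator G s) (J : Set (Set V)) :
    ExactSubgraphFeasible G J s (vecMulVec s s) := by
  refine ⟨⟨?_, fun i => ?_, fun i j hij => hs.2 i j hij⟩, fun I _ => ?_⟩
  · rw [← augment, augment_vecMulVec]
    simpa using posSemidef_vecMulVec_self_star (Sum.elim s 1)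
  · simpa [vecMulVec_apply] using hs.mul_self i
  · have hsI : IsStableIndicator (G.induce I) fun a => s a :=
      ⟨fun a => hs.1 a, fun a b hab => hs.2 a b hab⟩
    exact hsI.vecMulVec_mem_stab2

variable {G : SimpleGraph V} {J : Set (Set V)}

lemma le_zJ {x : V → ℝ} {X : Matrix V V ℝ} (h : ExactSubgraphFeasible G J x X) :
    ∑ i, x i ≤ zJ G J := by
  refine le_csSup ⟨Fintype.card V, ?_⟩ ⟨x, X, h.1, h.2, rfl⟩
  rintro _ ⟨y, Y, hY, -, rfl⟩
  simpa using Finset.sum_le_sum fun i (_ : i ∈ Finset.univ) => hY.le_one i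

lemma zJ_le {c : ℝ} (h : ∀ x X, ExactSubgraphFeasible G J x X → ∑ i, x i ≤ c) :
    zJ G J ≤ c := by
  have hempty : IsStableIndicator G 0 := ⟨fun _ => Or.inl rfl, fun _ _ _ => mul_zero _⟩
  obtain ⟨hθ, hJ⟩ := hempty.exactSubgraphFeasible J
  refine csSup_le ⟨_, 0, _, hθ, hJ, rfl⟩ ?_
  rintro _ ⟨x, X, hθ, hJ, rfl⟩
  exact h x X ⟨hθ, hJ⟩

end ExactSubgraph

theorem ExactSubgraphFeasible.lift_localRole {V : Type} [Fintype V] {G : SimpleGraph V}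
    {W : Set V} [Fintype W] {v0 : V} (hW : ∀ w ∈ W, ¬ G.Adj v0 w) {k : ℕ} {x : W → ℝ}
    {X : Matrix W W ℝ}
    (h : ExactSubgraphFeasible (G.induce W) {I | I.ncard = min k (Fintype.card W)} x X) :
    ExactSubgraphFeasible G {I | I.ncard = min k (Fintype.card V)}
      (liftVec (localRole W v0) x) (liftMat (localRole W v0) x X) := by
  have hρ := isPartialHom_localRole (v0 := v0) hW
  refine ⟨h.1.lift hρ, fun I hI => ?_⟩
  obtain ⟨I', hII', hI'⟩ := exists_preimage_val_subset_ncard_eq (W := W) hI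
  obtain ⟨ρ, hρI⟩ := exists_map_val_eq (S := I') (fun a : I => localRole W v0 a) fun a w ha =>
    hII' (show (w : V) ∈ I from coe_eq_of_localRole_eq_some_inl ha ▸ a.2)
  have hρI' : IsPartialHom (fun a => (ρ a).map (Sum.map (↑) id)) (G.induce I)
      (G.induce W ⊕g (⊥ : SimpleGraph Unit)) := by
    simp_rw [← hρI]
    exact fun a b p q hab => hρ hab
  have hsub : (liftMat (localRole W v0) x X).submatrix (↑) (↑) =
      liftMat ρ (fun i => X.submatrix (↑) (↑) i i) (X.submatrix ((↑) : I' → W) (↑)) := by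
    calc (liftMat (localRole W v0) x X).submatrix (↑) (↑)
        = liftMat (fun a => (ρ a).map (Sum.map (↑) id)) x X := by simp_rw [← hρI]; rfl
      _ = liftMat ρ (x ∘ (↑)) (X.submatrix (↑) (↑)) := liftMat_map _ _ _ _
      _ = _ := by
        congr 1
        funext i
        exact (h.1.2.1 i).symm
  rw [hsub]
  exact liftMat_mem_stab2 hρI'.of_map (h.2 I' hI')

theorem stmt17_general {V : Type} [Fintype V] (G : SimpleGraph V) (v0 : V) (k : ℕ) :
    1 + zk (G.induce {v : V | v ≠ v0 ∧ ¬ G.Adj v0 v}) k ≤ zk G k := by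
  set W := {v : V | v ≠ v0 ∧ ¬ G.Adj v0 v}
  have hv0 : v0 ∉ W := fun h => h.1 rfl
  have hW : ∀ w ∈ W, ¬ G.Adj v0 w := fun _ h => h.2
  suffices zk (G.induce W) k ≤ zk G k - 1 by linarith
  refine zJ_le fun x X h => le_sub_iff_add_le'.mpr ?_
  rw [← sum_liftVec_localRole hv0]
  exact le_zJ (h.lift_localRole hW)

theorem stmt17 {V : Type} [Fintype V] (G : SimpleGraph V) (r : ℕ)
    (hvt : ∀ u v : V, ∃ e : G ≃g G, e u = v)
    (hreg : G.IsRegularOfDegree r) (v0 : V) (k : ℕ) :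
    1 + zk (G.induce {v : V | v ≠ v0 ∧ ¬ G.Adj v0 v}) k ≤ zk G k :=
  stmt17_general G v0 k
end

section
/- For any graph G, z_2(G) ≤ ϑ*(G) ≤ z_1(G) = ϑ(G), where ϑ* is Schrijver's refinement of the Lovász theta function and z_k is the k-th level of the exact subgraph hierarchy. -/
open scoped Classical


/-- Schrijver's refinement ϑ* of the Lovász theta function: the theta SDP with
the additional entrywise non-negativity constraint. -/
noncomputable def thetaStar {V : Type} [Fintype V] (G : SimpleGraph V) : ℝ :=
  sSup {t | ∃ X : Matrix V V ℝ, X.PosSemidef ∧ (∀ i j, 0 ≤ X i j) ∧ X.trace = 1 ∧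
    (∀ i j, G.Adj i j → X i j = 0) ∧ t = ∑ i, ∑ j, X i j}

/-!
Rescaling a ϑ₁-feasible pair `(x, X)` by `(∑ x)⁻¹` gives a feasible matrix of the theta program
of value at least `∑ x`, because the Schur complement `X - x xᵀ ⪰ 0` yields `(∑ x)² ≤ 1ᵀ X 1`.
Conversely, a theta matrix `Y` of value `t = 1ᵀ Y 1` becomes ϑ₁-feasible after the congruence
`X = t⁻¹ D Y D`, `D = diag((Y 1)ᵢ / Yᵢᵢ)`, since `t Y - (Y 1)(Y 1)ᵀ ⪰ 0` by Cauchy–Schwarz, and a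
second Cauchy–Schwarz gives `∑ x ≥ t`. Exact subgraph constraints on single vertices only say
`0 ≤ xᵢ ≤ 1`, which ϑ₁-feasibility already implies, so `z₁ = ϑ`. On pairs they force `X ≥ 0`
entrywise, so the rescaled matrix is feasible for ϑ*, whence `z₂ ≤ ϑ*`.
-/

open Matrix

namespace Matrix

variable {n : Type*} [Fintype n] {Y : Matrix n n ℝ}

lemma sum_sum_eq_one_dotProduct_mulVec_one (A : Matrix n n ℝ) :
    ∑ i, ∑ j, A i j = 1 ⬝ᵥ A *ᵥ 1 := by
  simp [dotProduct, mulVec]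

lemma dotProduct_vecMulVec_mulVec_self (a v : n → ℝ) :
    v ⬝ᵥ vecMulVec a a *ᵥ v = (a ⬝ᵥ v) ^ 2 := by
  rw [vecMulVec_mulVec]
  simp [dotProduct_comm v a, sq]

lemma PosSemidef.dotProduct_mulVec_sq_le (hY : Y.PosSemidef) (u v : n → ℝ) :
    (u ⬝ᵥ Y *ᵥ v) ^ 2 ≤ (u ⬝ᵥ Y *ᵥ u) * (v ⬝ᵥ Y *ᵥ v) := by
  have hsymm : v ⬝ᵥ Y *ᵥ u = u ⬝ᵥ Y *ᵥ v := by
    conv_lhs => rw [← hY.isHermitian.eq, conjTranspose_eq_transpose_of_trivial]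
    rw [mulVec_transpose, dotProduct_comm, dotProduct_mulVec]
  have := LinearMap.BilinForm.apply_mul_apply_le_of_forall_zero_le (toLinearMap₂' ℝ Y)
    (fun w => by simpa [toLinearMap₂'_apply'] using hY.dotProduct_mulVec_nonneg w) u v
  simpa only [toLinearMap₂'_apply', hsymm, sq] using this

lemma PosSemidef.smul_sub_vecMulVec_mulVec (hY : Y.PosSemidef) (u : n → ℝ) :
    ((u ⬝ᵥ Y *ᵥ u) • Y - vecMulVec (Y *ᵥ u) (Y *ᵥ u)).PosSemidef := by
  refine .of_dotProduct_mulVec_nonneg ?_ fun v => ?_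
  · exact (hY.isHermitian.smul (by simp [IsSelfAdjoint])).sub
      (by simpa using (posSemidef_vecMulVec_self_star (Y *ᵥ u)).isHermitian)
  · have hcs := hY.dotProduct_mulVec_sq_le v u
    rw [star_trivial, sub_mulVec, dotProduct_sub, dotProduct_vecMulVec_mulVec_self, smul_mulVec,
      dotProduct_smul, smul_eq_mul, dotProduct_comm (Y *ᵥ u)]
    linarith [mul_comm (v ⬝ᵥ Y *ᵥ v) (u ⬝ᵥ Y *ᵥ u)]

lemma PosSemidef.mulVec_apply_sq_le (hY : Y.PosSemidef) (u : n → ℝ) (i : n) :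
    (Y *ᵥ u) i ^ 2 ≤ (u ⬝ᵥ Y *ᵥ u) * Y i i := by
  have h := (hY.smul_sub_vecMulVec_mulVec u).diag_nonneg (i := i)
  rw [Matrix.sub_apply, Matrix.smul_apply, vecMulVec_apply, smul_eq_mul] at h
  nlinarith

lemma PosSemidef.sq_sum_sum_le_sum_div (hY : Y.PosSemidef)
    (htr : Y.trace = 1) : (∑ i, ∑ j, Y i j) ^ 2 ≤ ∑ i, (Y *ᵥ 1) i ^ 2 / Y i i := by
  have hle : ∀ i, (Y *ᵥ 1) i ^ 2 ≤ Y i i * ((Y *ᵥ 1) i ^ 2 / Y i i) := by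
    intro i
    rcases eq_or_ne (Y i i) 0 with h | h
    · simpa [h] using hY.mulVec_apply_sq_le 1 i
    · rw [mul_div_cancel₀ _ h]
  have hcs := Finset.sum_sq_le_sum_mul_sum_of_sq_le_mul Finset.univ
    (fun i _ => hY.diag_nonneg) (fun i _ => div_nonneg (sq_nonneg _) hY.diag_nonneg)
    (fun i _ => hle i)
  have hsum : ∑ i, (Y *ᵥ 1) i = ∑ i, ∑ j, Y i j := by simp [mulVec, dotProduct]
  have htr' : ∑ i, Y i i = 1 := htr
  rwa [hsum, htr', one_mul] at hcs

lemma PosSemidef.two_mul_apply_le_add (hY : Y.PosSemidef) (i j : n) :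
    2 * Y i j ≤ Y i i + Y j j := by
  have h := hY.dotProduct_mulVec_nonneg (Pi.single i 1 - Pi.single j 1)
  have hji : Y j i = Y i j := by simpa using congrFun₂ hY.isHermitian.eq i j
  simp only [star_trivial, mulVec_sub, dotProduct_sub, sub_dotProduct, mulVec_single_one,
    single_one_dotProduct, col_apply] at h
  linarith

lemma PosSemidef.sum_sum_le_card_mul_trace (hY : Y.PosSemidef) :
    ∑ i, ∑ j, Y i j ≤ Fintype.card n * Y.trace := by
  have h := Finset.sum_le_sum fun i (_ : i ∈ Finset.univ) =>
    Finset.sum_le_sum fun j (_ : j ∈ Finset.univ) => hY.two_mul_apply_le_add i j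
  simp only [← Finset.mul_sum, Finset.sum_add_distrib, Finset.sum_const, Finset.card_univ,
    nsmul_eq_mul] at h
  simp only [trace, diag_apply]
  linarith

lemma fromBlocks_posSemidef_iff_sub_vecMulVec (X : Matrix n n ℝ) (x : n → ℝ) :
    (fromBlocks X (of fun i (_ : Unit) => x i) (of fun (_ : Unit) j => x j) 1).PosSemidef ↔
      (X - vecMulVec x x).PosSemidef := by
  have hrow : (of fun (_ : Unit) j => x j) = (of fun i (_ : Unit) => x i)ᴴ := by
    ext; simp
  have hschur : vecMulVec x x = (of fun i (_ : Unit) => x i) * (1 : Matrix Unit Unit ℝ)⁻¹ *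
      (of fun i (_ : Unit) => x i)ᴴ := by
    ext; simp [mul_apply, vecMulVec_apply]
  have : Invertible (1 : Matrix Unit Unit ℝ) := invertibleOne
  rw [hrow, hschur]
  exact PosDef.fromBlocks₂₂ _ _ PosDef.one

end Matrix

section Stab2

variable {W : Type} (H : SimpleGraph W)

lemma zero_mem_stab2 : (0 : Matrix W W ℝ) ∈ stab2 H :=
  subset_convexHull ℝ _ ⟨0, fun _ => Or.inl rfl, fun _ _ _ => by simp, by simp⟩

lemma nonneg_of_mem_stab2 {M : Matrix W W ℝ} (hM : M ∈ stab2 H) (i j : W) : 0 ≤ M i j := by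
  refine convexHull_min ?_ (convex_halfSpace_ge (f := fun M : Matrix W W ℝ => M i j)
    ⟨fun _ _ => rfl, fun _ _ => rfl⟩ 0) hM
  rintro _ ⟨s, hs, -, rfl⟩
  rcases hs i with h | h <;> rcases hs j with h' | h' <;> simp [vecMulVec_apply, h, h']

lemma mem_stab2_of_subsingleton [Subsingleton W] {M : Matrix W W ℝ}
    (hM : ∀ i, M i i ∈ Set.Icc 0 1) : M ∈ stab2 H := by
  cases isEmpty_or_nonempty W with
  | inl _ => exact Subsingleton.elim (0 : Matrix W W ℝ) M ▸ zero_mem_stab2 H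
  | inr hne =>
    obtain ⟨w⟩ := hne
    have hall : vecMulVec (1 : W → ℝ) 1 ∈ stab2 H :=
      subset_convexHull ℝ _ ⟨1, fun _ => Or.inr rfl,
        fun i j hij => absurd (Subsingleton.elim i j ▸ hij) (H.irrefl), rfl⟩
    have hM_eq : M = M w w • vecMulVec (1 : W → ℝ) 1 := by
      ext i j
      simp [Subsingleton.elim i w, Subsingleton.elim j w]
    rw [hM_eq]
    exact (convex_convexHull ℝ _).smul_mem_of_zero_mem (zero_mem_stab2 H) hall (hM w)

end Stab2

section Theta1

variable {V : Type} [Fintype V] {G : SimpleGraph V} {x : V → ℝ} {X : Matrix V V ℝ}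

lemma theta1Feasible_iff :
    Theta1Feasible G x X ↔ (X - vecMulVec x x).PosSemidef ∧ (∀ i, X i i = x i) ∧
      ∀ i j, G.Adj i j → X i j = 0 := by
  rw [Theta1Feasible, fromBlocks_posSemidef_iff_sub_vecMulVec]

namespace Theta1Feasible

lemma posSemidef_sub_vecMulVec (hf : Theta1Feasible G x X) : (X - vecMulVec x x).PosSemidef :=
  (theta1Feasible_iff.mp hf).1

lemma posSemidef (hf : Theta1Feasible G x X) : X.PosSemidef := by
  simpa using hf.posSemidef_sub_vecMulVec.add (posSemidef_vecMulVec_self_star x)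

lemma mem_Icc (hf : Theta1Feasible G x X) (i : V) : x i ∈ Set.Icc 0 1 := by
  have h := hf.posSemidef_sub_vecMulVec.diag_nonneg (i := i)
  rw [Matrix.sub_apply, vecMulVec_apply, hf.2.1 i] at h
  constructor <;> nlinarith

lemma sq_sum_le_sum_sum (hf : Theta1Feasible G x X) : (∑ i, x i) ^ 2 ≤ ∑ i, ∑ j, X i j := by
  have h := hf.posSemidef_sub_vecMulVec.dotProduct_mulVec_nonneg 1
  rw [star_trivial, sub_mulVec, dotProduct_sub, dotProduct_vecMulVec_mulVec_self,
    dotProduct_one, sub_nonneg] at h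
  rwa [sum_sum_eq_one_dotProduct_mulVec_one]

lemma trace_eq (hf : Theta1Feasible G x X) : X.trace = ∑ i, x i :=
  Finset.sum_congr rfl fun i _ => hf.2.1 i

lemma sum_le_sum_sum_inv_smul (hf : Theta1Feasible G x X) (ht : 0 < ∑ i, x i) :
    ∑ i, x i ≤ ∑ i, ∑ j, ((∑ i, x i)⁻¹ • X) i j := by
  simp only [Matrix.smul_apply, smul_eq_mul, ← Finset.mul_sum]
  rw [le_inv_mul_iff₀ ht]
  nlinarith [hf.sq_sum_le_sum_sum]

lemma nonneg_apply (hf : Theta1Feasible G x X)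
    (hpair : ∀ i j, i ≠ j → X.submatrix (fun a : ({i, j} : Set V) => (a : V))
      (fun a : ({i, j} : Set V) => (a : V)) ∈ stab2 (G.induce {i, j}))
    (i j : V) : 0 ≤ X i j := by
  rcases eq_or_ne i j with rfl | hij
  · exact hf.2.1 i ▸ (hf.mem_Icc i).1
  · simpa using nonneg_of_mem_stab2 _ (hpair i j hij) ⟨i, by simp⟩ ⟨j, by simp⟩

lemma submatrix_mem_stab2_of_ncard_le_one (hf : Theta1Feasible G x X) {I : Set V}
    (hI : I.ncard ≤ 1) :
    X.submatrix (fun a : I => (a : V)) (fun a : I => (a : V)) ∈ stab2 (G.induce I) := by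
  have : Subsingleton I := (Set.ncard_le_one_iff_subsingleton.mp hI).coe_sort
  exact mem_stab2_of_subsingleton _ fun a => by simpa [hf.2.1] using hf.mem_Icc a

end Theta1Feasible

end Theta1

section Construction

variable {V : Type} [Fintype V] {G : SimpleGraph V}

lemma exists_theta1Feasible_of_posSemidef {Y : Matrix V V ℝ} (hY : Y.PosSemidef)
    (htr : Y.trace = 1) (hE : ∀ i j, G.Adj i j → Y i j = 0) (ht : 0 < ∑ i, ∑ j, Y i j) :
    ∃ (x : V → ℝ) (X : Matrix V V ℝ), Theta1Feasible G x X ∧ ∑ i, ∑ j, Y i j ≤ ∑ i, x i := by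
  set t := ∑ i, ∑ j, Y i j
  set c := Y *ᵥ 1
  -- Division by zero makes `e i = 0` when `Y i i = 0`.
  set e : V → ℝ := fun i => c i / Y i i with he_def
  have hec : ∀ i, e i * Y i i * e i = e i * c i := by
    intro i
    rcases eq_or_ne (Y i i) 0 with h | h
    · simp [he_def, h]
    · simp only [he_def]
      field_simp
  refine ⟨t⁻¹ • (diagonal e *ᵥ c), t⁻¹ • (diagonal e * Y * diagonal e),
    theta1Feasible_iff.mpr ⟨?_, fun i => ?_, fun i j hij => ?_⟩, ?_⟩
  · have hpsd := ((hY.smul_sub_vecMulVec_mulVec 1).mul_mul_conjTranspose_same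
      (diagonal e)).smul (sq_nonneg t⁻¹)
    rw [← sum_sum_eq_one_dotProduct_mulVec_one, diagonal_conjTranspose, star_trivial] at hpsd
    convert hpsd using 1
    ext i j
    simp only [Matrix.sub_apply, Matrix.smul_apply, mul_diagonal, diagonal_mul, vecMulVec_apply,
      mulVec_diagonal, smul_eq_mul, Pi.smul_apply]
    field_simp
    ring
  · simp only [Matrix.smul_apply, mul_diagonal, diagonal_mul, mulVec_diagonal, Pi.smul_apply,
      smul_eq_mul, hec]
  · simp [mul_diagonal, diagonal_mul, hE i j hij]
  · have hec' : ∀ i, e i * c i = c i ^ 2 / Y i i := fun i => by rw [he_def]; ring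
    simp only [Pi.smul_apply, mulVec_diagonal, smul_eq_mul, ← Finset.mul_sum, hec']
    rw [le_inv_mul_iff₀ ht]
    nlinarith [hY.sq_sum_sum_le_sum_div htr]

end Construction

section Values

variable {V : Type} [Fintype V] (G : SimpleGraph V)

lemma lovaszTheta_nonneg_s18 : 0 ≤ lovaszTheta G := by
  refine Real.sSup_nonneg ?_
  rintro _ ⟨X, hX, -, -, rfl⟩
  simpa [sum_sum_eq_one_dotProduct_mulVec_one] using hX.dotProduct_mulVec_nonneg 1

lemma thetaStar_nonneg : 0 ≤ thetaStar G := by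
  refine Real.sSup_nonneg ?_
  rintro _ ⟨X, hX, -, -, -, rfl⟩
  simpa [sum_sum_eq_one_dotProduct_mulVec_one] using hX.dotProduct_mulVec_nonneg 1

variable {G} {x : V → ℝ} {X : Matrix V V ℝ}

lemma sum_sum_le_lovaszTheta (hX : X.PosSemidef) (htr : X.trace = 1)
    (hE : ∀ i j, G.Adj i j → X i j = 0) : ∑ i, ∑ j, X i j ≤ lovaszTheta G := by
  refine le_csSup ⟨Fintype.card V, ?_⟩ ⟨X, hX, htr, hE, rfl⟩
  rintro _ ⟨Y, hY, hYtr, -, rfl⟩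
  simpa [hYtr] using hY.sum_sum_le_card_mul_trace

lemma sum_sum_le_thetaStar (hX : X.PosSemidef) (hX0 : ∀ i j, 0 ≤ X i j)
    (htr : X.trace = 1) (hE : ∀ i j, G.Adj i j → X i j = 0) :
    ∑ i, ∑ j, X i j ≤ thetaStar G := by
  refine le_csSup ⟨Fintype.card V, ?_⟩ ⟨X, hX, hX0, htr, hE, rfl⟩
  rintro _ ⟨Y, hY, -, hYtr, -, rfl⟩
  simpa [hYtr] using hY.sum_sum_le_card_mul_trace

lemma Theta1Feasible.sum_le_zJ {J : Set (Set V)} (hf : Theta1Feasible G x X)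
    (hJ : ∀ I ∈ J, X.submatrix (fun a : I => (a : V)) (fun a : I => (a : V)) ∈
      stab2 (G.induce I)) : ∑ i, x i ≤ zJ G J := by
  refine le_csSup ⟨Fintype.card V, ?_⟩ ⟨x, X, hf, hJ, rfl⟩
  rintro _ ⟨y, Y, hg, -, rfl⟩
  simpa using Finset.sum_le_sum fun i (_ : i ∈ Finset.univ) => (hg.mem_Icc i).2

lemma zJ_nonneg (J : Set (Set V)) : 0 ≤ zJ G J := by
  have hzero : Theta1Feasible G (0 : V → ℝ) 0 :=
    theta1Feasible_iff.mpr ⟨by simpa using PosSemidef.zero, by simp, by simp⟩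
  simpa using hzero.sum_le_zJ (J := J) fun I _ => by simpa using zero_mem_stab2 _

lemma Theta1Feasible.sum_le_lovaszTheta (hf : Theta1Feasible G x X) : ∑ i, x i ≤ lovaszTheta G := by
  rcases le_or_gt (∑ i, x i) 0 with ht | ht
  · exact ht.trans (lovaszTheta_nonneg_s18 G)
  refine (hf.sum_le_sum_sum_inv_smul ht).trans (sum_sum_le_lovaszTheta
    (hf.posSemidef.smul (inv_nonneg.mpr ht.le)) ?_ fun i j hij => by simp [hf.2.2 i j hij])
  rw [trace_smul, hf.trace_eq, smul_eq_mul, inv_mul_cancel₀ ht.ne']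

lemma Theta1Feasible.sum_le_thetaStar (hf : Theta1Feasible G x X) (hX : ∀ i j, 0 ≤ X i j) :
    ∑ i, x i ≤ thetaStar G := by
  rcases le_or_gt (∑ i, x i) 0 with ht | ht
  · exact ht.trans (thetaStar_nonneg G)
  refine (hf.sum_le_sum_sum_inv_smul ht).trans (sum_sum_le_thetaStar
    (hf.posSemidef.smul (inv_nonneg.mpr ht.le))
    (fun i j => mul_nonneg (inv_nonneg.mpr ht.le) (hX i j)) ?_
    fun i j hij => by simp [hf.2.2 i j hij])
  rw [trace_smul, hf.trace_eq, smul_eq_mul, inv_mul_cancel₀ ht.ne']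

end Values

section Hierarchy

variable {V : Type} [Fintype V] (G : SimpleGraph V)

lemma thetaStar_le_lovaszTheta : thetaStar G ≤ lovaszTheta G :=
  Real.sSup_le (fun _ ⟨_, hX, _, htr, hE, ht⟩ => ht ▸ sum_sum_le_lovaszTheta hX htr hE)
    (lovaszTheta_nonneg_s18 G)

lemma zJ_le_lovaszTheta (J : Set (Set V)) : zJ G J ≤ lovaszTheta G :=
  Real.sSup_le (fun _ ⟨_, _, hf, _, ht⟩ => ht ▸ hf.sum_le_lovaszTheta) (lovaszTheta_nonneg_s18 G)

lemma lovaszTheta_le_zk_one : lovaszTheta G ≤ zk G 1 := by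
  refine Real.sSup_le ?_ (zJ_nonneg _)
  rintro _ ⟨Y, hY, htr, hE, rfl⟩
  rcases le_or_gt (∑ i, ∑ j, Y i j) 0 with ht | ht
  · exact ht.trans (zJ_nonneg _)
  obtain ⟨x, X, hf, hle⟩ := exists_theta1Feasible_of_posSemidef hY htr hE ht
  exact hle.trans <| hf.sum_le_zJ fun I hI =>
    hf.submatrix_mem_stab2_of_ncard_le_one (hI.trans_le (min_le_left _ _))

lemma zk_two_le_thetaStar : zk G 2 ≤ thetaStar G := by
  refine Real.sSup_le ?_ (thetaStar_nonneg G)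
  rintro _ ⟨x, X, hf, hJ, rfl⟩
  refine hf.sum_le_thetaStar (hf.nonneg_apply fun i j hij => hJ _ ?_)
  have h2 : 2 ≤ Fintype.card V := Fintype.one_lt_card_iff.mpr ⟨i, j, hij⟩
  simp [Set.ncard_pair hij, h2]

end Hierarchy

theorem stmt18 {V : Type} [Fintype V] (G : SimpleGraph V) :
    zk G 2 ≤ thetaStar G ∧ thetaStar G ≤ zk G 1 ∧ zk G 1 = lovaszTheta G := by
  have hz1 : zk G 1 = lovaszTheta G := le_antisymm (zJ_le_lovaszTheta G _) (lovaszTheta_le_zk_one G)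
  exact ⟨zk_two_le_thetaStar G, hz1 ▸ thetaStar_le_lovaszTheta G, hz1⟩
end

section
/- Let q ≡ 1 (mod 4) be prime. Let L_q be the subgraph of the Paley graph P_q induced by the nonzero quadratic residues mod q (the neighbors of 0), and let P_q^L be the subgraph induced by the quadratic non-residues (the non-neighbors of 0 other than 0). Then P_q^L is isomorphic to the complement of L_q. -/
open scoped Classical

theorem stmt19 (q : ℕ) [Fact (Nat.Prime q)] (hq : q % 4 = 1) :
    Nonempty
      ((Paley (ZMod q)).induce {x : ZMod q | x ≠ 0 ∧ ¬ ∃ y : ZMod q, x = y ^ 2} ≃g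
        ((Paley (ZMod q)).induce {x : ZMod q | x ≠ 0 ∧ ∃ y : ZMod q, x = y ^ 2})ᶜ) := by
  have h2 : q ≠ 2 := by omega
  have hchar : ringChar (ZMod q) ≠ 2 := by
    rw [ZMod.ringChar_zmod_n]; exact h2
  obtain ⟨β, hβ⟩ := FiniteField.exists_nonsquare (F := ZMod q) hchar
  have hβ0 : β ≠ 0 := fun h => hβ (h ▸ ⟨0, by simp⟩)
  have hm1 : IsSquare (-1 : ZMod q) := ZMod.exists_sq_eq_neg_one_iff.mpr (by omega)
  have key : ∀ a : ZMod q, a ≠ 0 → (IsSquare (β * a) ↔ ¬ IsSquare a) := by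
    intro a ha
    have hmul : β * a ≠ 0 := mul_ne_zero hβ0 ha
    rw [← quadraticChar_one_iff_isSquare hmul, map_mul,
      quadraticChar_neg_one_iff_not_isSquare.mpr hβ,
      ← quadraticChar_one_iff_isSquare ha]
    rcases quadraticChar_dichotomy ha with h | h <;> rw [h] <;> norm_num
  have pad : ∀ x y : ZMod q, (Paley (ZMod q)).Adj x y ↔ x ≠ y ∧ IsSquare (x - y) := by
    intro x y
    rw [Paley, SimpleGraph.fromRel_adj]
    constructor
    · rintro ⟨hne, ⟨z, hz0, hz⟩ | ⟨z, hz0, hz⟩⟩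
      · exact ⟨hne, ⟨z, by rw [hz]; ring⟩⟩
      · refine ⟨hne, ?_⟩
        have : x - y = (-1) * (y - x) := by ring
        rw [this, hz]
        exact hm1.mul ⟨z, by ring⟩
    · rintro ⟨hne, z, hz⟩
      have hz0 : z ≠ 0 := by
        rintro rfl
        exact sub_ne_zero.mpr hne (by simpa using hz)
      exact ⟨hne, Or.inl ⟨z, hz0, by rw [hz]; ring⟩⟩
  have keyinv : ∀ a : ZMod q, a ≠ 0 → (IsSquare (β⁻¹ * a) ↔ ¬ IsSquare a) := by
    intro a ha
    have := key (β⁻¹ * a) (mul_ne_zero (inv_ne_zero hβ0) ha)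
    rw [mul_inv_cancel_left₀ hβ0] at this
    tauto
  have hs : ∀ a : ZMod q, (∃ y : ZMod q, a = y ^ 2) ↔ IsSquare a :=
    fun a => (isSquare_iff_exists_sq a).symm
  refine ⟨⟨⟨fun x => ⟨β⁻¹ * x.1, ?_, ?_⟩, fun y => ⟨β * y.1, ?_, ?_⟩, ?_, ?_⟩, ?_⟩⟩
  · exact mul_ne_zero (inv_ne_zero hβ0) x.2.1
  · exact (hs _).mpr ((keyinv x.1 x.2.1).mpr (fun h => x.2.2 ((hs _).mpr h)))
  · exact mul_ne_zero hβ0 y.2.1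
  · exact fun h => ((key y.1 y.2.1).mp ((hs _).mp h)) ((hs _).mp y.2.2)
  · intro x; ext; simp [mul_inv_cancel_left₀ hβ0]
  · intro y; ext; simp [inv_mul_cancel_left₀ hβ0]
  · intro a b
    simp only [Equiv.coe_fn_mk, SimpleGraph.compl_adj, SimpleGraph.comap_adj, pad,
      ne_eq, Function.Embedding.coe_subtype, Subtype.mk.injEq, Subtype.ext_iff]
    by_cases hab : (a : ZMod q) = (b : ZMod q)
    · simp [hab]
    · have hne' : β⁻¹ * (a : ZMod q) ≠ β⁻¹ * (b : ZMod q) :=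
        fun h => hab (mul_left_cancel₀ (inv_ne_zero hβ0) h)
      have hk := keyinv ((a : ZMod q) - (b : ZMod q)) (sub_ne_zero.mpr hab)
      rw [mul_sub] at hk
      constructor
      · rintro ⟨-, h⟩
        exact ⟨hab, not_not.mp fun hn => h ⟨hne', hk.mpr hn⟩⟩
      · rintro ⟨-, h⟩
        exact ⟨hne', fun hc => (hk.mp hc.2) h⟩
end
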